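/- arXiv:2011.00501 — 14 statements merged into one kernel-verified Lean document; each statement's English description precedes it below -/
import Mathlib

section
/- Let A be an associative unital ring, M an A-bimodule, and B an antisymmetric biderivation of A with values in M. Then for any pair of orthogonal idempotents e, f ∈ A one has B(e,f) = 0. -/
open MulOpposite

/-- If `B` is an antisymmetric biderivation of a unital ring `A` with values in
an `A`-bimodule `M`, then `B e f = 0` for any pair of orthogonal idempotents `e, f ∈ A`. -/
theorem antisymm_bider_orthogonal_idempotents
    {A M : Type*} [Ring A] [AddCommGroup M] [Module A M] [Module Aᵐᵒᵖ M]
    [SMulCommClass A Aᵐᵒᵖ M]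
    (B : A → A → M)
    (hadd_left : ∀ x y z : A, B (x + y) z = B x z + B y z)
    (hadd_right : ∀ x y z : A, B x (y + z) = B x y + B x z)
    (hder_left : ∀ x y z : A, B (x * y) z = op y • B x z + x • B y z)
    (hder_right : ∀ x y z : A, B x (y * z) = op z • B x y + y • B x z)
    (hanti : ∀ x : A, B x x = 0)
    (e f : A) (he : e * e = e) (hf : f * f = f)
    (hef : e * f = 0) (hfe : f * e = 0) :
    B e f = 0 := by
  have h0 : B e 0 = 0 := by
    have h := hadd_right e 0 0
    rw [add_zero] at h
    exact (left_eq_add.mp h)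
  have h1 : op e • B e f = 0 := by
    have h := hder_right e f e
    rw [hfe, h0, hanti, smul_zero, add_zero] at h
    exact h.symm
  have h2 : e • B e f = 0 := by
    have h := hder_right e e f
    rw [hef, h0, hanti, smul_zero, zero_add] at h
    exact h.symm
  have h := hder_left e e f
  rw [he, h1, h2, add_zero] at h
  exact h
end

section
/- Let A be an associative unital ring, M an A-bimodule, and B an antisymmetric biderivation of A with values in M. Let e, f, g ∈ A be idempotents such that any two of them are either equal or orthogonal. Then B(e, fxg) = f·B(e,x)·g for all x ∈ A. Moreover, if e is orthogonal to both f and g, then B(e, fxg) = 0 for all x ∈ A. -/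
open MulOpposite

/-- Let `B` be an antisymmetric biderivation of a unital ring `A` with values in
an `A`-bimodule `M`, and let `e, f, g` be idempotents of `A` such that any two of them are either
equal or orthogonal. Then `B e (f*x*g) = f • B e x • g` for all `x`; moreover, if `e` is
orthogonal to both `f` and `g`, then `B e (f*x*g) = 0` for all `x`. -/
theorem antisymm_bider_sandwich
    {A M : Type*} [Ring A] [AddCommGroup M] [Module A M] [Module Aᵐᵒᵖ M]
    [SMulCommClass A Aᵐᵒᵖ M]
    (B : A → A → M)
    (hadd_left : ∀ x y z : A, B (x + y) z = B x z + B y z)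
    (hadd_right : ∀ x y z : A, B x (y + z) = B x y + B x z)
    (hder_left : ∀ x y z : A, B (x * y) z = op y • B x z + x • B y z)
    (hder_right : ∀ x y z : A, B x (y * z) = op z • B x y + y • B x z)
    (hanti : ∀ x : A, B x x = 0)
    (e f g : A) (he : e * e = e) (hf : f * f = f) (hg : g * g = g)
    (hef : e = f ∨ (e * f = 0 ∧ f * e = 0))
    (heg : e = g ∨ (e * g = 0 ∧ g * e = 0))
    (hfg : f = g ∨ (f * g = 0 ∧ g * f = 0)) :
    (∀ x : A, B e (f * x * g) = f • op g • B e x) ∧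
      ((e * f = 0 ∧ f * e = 0 ∧ e * g = 0 ∧ g * e = 0) →
        ∀ x : A, B e (f * x * g) = 0) := by
  haveI : SMulCommClass Aᵐᵒᵖ A M := SMulCommClass.symm A Aᵐᵒᵖ M
  -- B p 0 = 0
  have hBr0 : ∀ p : A, B p 0 = 0 := by
    intro p
    have h := hadd_right p 0 0
    simpa using h
  -- if p is idempotent and p,q orthogonal then B p q = 0
  have horth : ∀ p q : A, p * p = p → p * q = 0 → q * p = 0 → B p q = 0 := by
    intro p q hp hpq hqp
    have h1 : p • B p q = 0 := by
      have h := hder_right p p q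
      rw [hpq, hBr0, hanti, smul_zero, zero_add] at h
      exact h.symm
    have h2 : op p • B p q = 0 := by
      have h := hder_right p q p
      rw [hqp, hBr0, hanti, smul_zero, add_zero] at h
      exact h.symm
    have h := hder_left p p q
    rw [hp, h1, h2, add_zero] at h
    exact h
  have hBef : B e f = 0 := by
    rcases hef with h | ⟨h1, h2⟩
    · rw [h]; exact hanti f
    · exact horth e f he h1 h2
  have hBeg : B e g = 0 := by
    rcases heg with h | ⟨h1, h2⟩
    · rw [h]; exact hanti g
    · exact horth e g he h1 h2
  have part1 : ∀ x : A, B e (f * x * g) = f • op g • B e x := by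
    intro x
    rw [hder_right e (f * x) g, hder_right e f x, hBef, hBeg, smul_zero, smul_zero,
      zero_add, add_zero, smul_comm]
  refine ⟨part1, ?_⟩
  rintro ⟨h1, h2, h3, h4⟩ x
  rw [part1 x]
  have hL : B e x = op e • B e x + e • B e x := by
    have h := hder_left e e x
    rw [he] at h
    exact h
  rw [hL, smul_add, smul_add, smul_smul, ← op_mul, h3, op_zero, zero_smul, smul_zero,
    zero_add, smul_comm (op g) e (B e x), smul_smul f e, h2, zero_smul]
end

section
/- Let A be an associative unital ring, M an A-bimodule, and B an antisymmetric biderivation of A with values in M. Let e, f ∈ A be idempotents which are either equal or orthogonal. Then for all x ∈ A one has B(e, exf) = B(exf, f). -/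
open MulOpposite

/-! Once `B e e = B f f = B e f = 0`, the Leibniz rules reduce the two sides to
`e • op f • B e x` and `op f • e • B x f`. For `e = f` both vanish, because expanding `B (e*e) x`
and `B x (e*e)` shows `e • op e • B e x = e • op e • B x e = 0`. For orthogonal `e, f`, expanding
`0 = B (e*f) x` with antisymmetry gives `op f • B e x = e • B x f`, so both sides equal
`e • B x f`. -/

namespace Biderivation

variable {A M : Type*} [Ring A] [AddCommGroup M] {B : A → A → M}

theorem apply_swap
    (hadd_left : ∀ x y z : A, B (x + y) z = B x z + B y z)
    (hadd_right : ∀ x y z : A, B x (y + z) = B x y + B x z)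
    (hanti : ∀ x : A, B x x = 0) (a b : A) :
    B a b = -B b a := by
  have h := hanti (a + b)
  rw [hadd_left, hadd_right, hadd_right, hanti, hanti, zero_add, add_zero] at h
  exact eq_neg_of_add_eq_zero_left h

variable [Module A M] [Module Aᵐᵒᵖ M]

theorem apply_zero_left
    (hder_left : ∀ x y z : A, B (x * y) z = op y • B x z + x • B y z) (a : A) :
    B 0 a = 0 := by
  simpa using hder_left 0 0 a

theorem apply_zero_right
    (hder_right : ∀ x y z : A, B x (y * z) = op z • B x y + y • B x z) (a : A) :
    B a 0 = 0 := by
  simpa using hder_right a 0 0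

theorem smul_op_smul_apply_idempotent_left
    (hder_left : ∀ x y z : A, B (x * y) z = op y • B x z + x • B y z)
    {e : A} (he : e * e = e) (x : A) :
    e • op e • B e x = 0 := by
  have h := congrArg (e • ·) (hder_left e e x)
  simp only [he, smul_add, smul_smul] at h
  exact right_eq_add.mp h

theorem smul_op_smul_apply_idempotent_right
    (hder_right : ∀ x y z : A, B x (y * z) = op z • B x y + y • B x z)
    {e : A} (he : e * e = e) (x : A) :
    e • op e • B x e = 0 := by
  have h := congrArg (e • ·) (hder_right x e e)
  simp only [he, smul_add, smul_smul] at h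
  exact right_eq_add.mp h

theorem apply_mul_mul_right
    (hder_right : ∀ x y z : A, B x (y * z) = op z • B x y + y • B x z)
    {e f : A} (hee : B e e = 0) (hef : B e f = 0) (x : A) :
    B e (e * x * f) = e • op f • B e x := by
  rw [mul_assoc, hder_right, hder_right, hee, hef]
  simp only [smul_zero, zero_add, add_zero]

theorem apply_mul_mul_left
    (hder_left : ∀ x y z : A, B (x * y) z = op y • B x z + x • B y z)
    {e f : A} (hff : B f f = 0) (hef : B e f = 0) (x : A) :
    B (e * x * f) f = op f • e • B x f := by
  rw [hder_left, hder_left, hff, hef]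
  simp only [smul_zero, zero_add, add_zero]

theorem apply_eq_zero_of_orthogonal
    (hder_left : ∀ x y z : A, B (x * y) z = op y • B x z + x • B y z)
    (hder_right : ∀ x y z : A, B x (y * z) = op z • B x y + y • B x z)
    (hanti : ∀ x : A, B x x = 0)
    {e f : A} (he : e * e = e) (hef : e * f = 0) (hfe : f * e = 0) :
    B e f = 0 := by
  have h₁ : e • B e f = 0 := by
    simpa [hef, hanti, apply_zero_right hder_right] using (hder_right e e f).symm
  have h₂ : op e • B e f = 0 := by
    simpa [hfe, hanti, apply_zero_right hder_right] using (hder_right e f e).symm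
  rw [← he, hder_left, h₁, h₂, add_zero]

theorem op_smul_apply_eq_smul_apply_of_mul_eq_zero
    (hadd_left : ∀ x y z : A, B (x + y) z = B x z + B y z)
    (hadd_right : ∀ x y z : A, B x (y + z) = B x y + B x z)
    (hder_left : ∀ x y z : A, B (x * y) z = op y • B x z + x • B y z)
    (hanti : ∀ x : A, B x x = 0)
    {e f : A} (hef : e * f = 0) (x : A) :
    op f • B e x = e • B x f := by
  have h := hder_left e f x
  rw [hef, apply_zero_left hder_left, apply_swap hadd_left hadd_right hanti f x,
    smul_neg] at h
  exact sub_eq_zero.mp (by rw [sub_eq_add_neg, ← h])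

end Biderivation

open Biderivation in
/-- Let `B` be an antisymmetric biderivation of a unital ring `A` with values in
an `A`-bimodule `M`, and let `e, f` be idempotents of `A` which are either equal or orthogonal.
Then `B e (e*x*f) = B (e*x*f) f` for all `x ∈ A`. -/
theorem antisymm_bider_exf
    {A M : Type*} [Ring A] [AddCommGroup M] [Module A M] [Module Aᵐᵒᵖ M]
    [SMulCommClass A Aᵐᵒᵖ M]
    (B : A → A → M)
    (hadd_left : ∀ x y z : A, B (x + y) z = B x z + B y z)
    (hadd_right : ∀ x y z : A, B x (y + z) = B x y + B x z)
    (hder_left : ∀ x y z : A, B (x * y) z = op y • B x z + x • B y z)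
    (hder_right : ∀ x y z : A, B x (y * z) = op z • B x y + y • B x z)
    (hanti : ∀ x : A, B x x = 0)
    (e f : A) (he : e * e = e) (hf : f * f = f)
    (hef : e = f ∨ (e * f = 0 ∧ f * e = 0)) :
    ∀ x : A, B e (e * x * f) = B (e * x * f) f := by
  intro x
  rcases hef with rfl | ⟨hef, hfe⟩
  · rw [apply_mul_mul_right hder_right (hanti e) (hanti e),
      apply_mul_mul_left hder_left (hanti e) (hanti e), ← smul_comm e (op e) (B x e),
      smul_op_smul_apply_idempotent_left hder_left he,
      smul_op_smul_apply_idempotent_right hder_right he]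
  · have hBef := apply_eq_zero_of_orthogonal hder_left hder_right hanti he hef hfe
    have hkey :=
      op_smul_apply_eq_smul_apply_of_mul_eq_zero hadd_left hadd_right hder_left hanti hef x
    calc B e (e * x * f) = e • op f • B e x := apply_mul_mul_right hder_right (hanti e) hBef x
      _ = e • B x f := by rw [hkey, smul_smul, he]
      _ = op f • e • B x f := by rw [← hkey, smul_smul, ← op_mul, hf]
      _ = B (e * x * f) f := (apply_mul_mul_left hder_left (hanti f) hBef x).symm
end

section
/- Let A be an associative unital ring, M an A-bimodule, and B an antisymmetric biderivation of A with values in M. Let e, f, g ∈ A be pairwise orthogonal idempotents. Then for all x, y ∈ A one has B(exf, fyg) = e·B(e,x)·f·y·g. -/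
open MulOpposite

/-- Let `B` be an antisymmetric biderivation of a unital ring `A` with values in
an `A`-bimodule `M`, and let `e, f, g` be pairwise orthogonal idempotents of `A`. Then
`B (e*x*f) (f*y*g) = e • B e x • (f*y*g)` for all `x, y ∈ A`. -/
theorem antisymm_bider_exf_fyg
    {A M : Type*} [Ring A] [AddCommGroup M] [Module A M] [Module Aᵐᵒᵖ M]
    [SMulCommClass A Aᵐᵒᵖ M]
    (B : A → A → M)
    (hadd_left : ∀ x y z : A, B (x + y) z = B x z + B y z)
    (hadd_right : ∀ x y z : A, B x (y + z) = B x y + B x z)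
    (hder_left : ∀ x y z : A, B (x * y) z = op y • B x z + x • B y z)
    (hder_right : ∀ x y z : A, B x (y * z) = op z • B x y + y • B x z)
    (hanti : ∀ x : A, B x x = 0)
    (e f g : A) (he : e * e = e) (hf : f * f = f) (hg : g * g = g)
    (hef : e * f = 0) (hfe : f * e = 0)
    (heg : e * g = 0) (hge : g * e = 0)
    (hfg : f * g = 0) (hgf : g * f = 0) :
    ∀ x y : A, B (e * x * f) (f * y * g) = e • op (f * y * g) • B e x := by
  intro x y
  set u : A := e * x * f with hu
  set v : A := f * y * g with hv
  -- B(0, z) = 0 and B(z, 0) = 0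
  have hB0l : ∀ z : A, B 0 z = 0 := by
    intro z
    have h := hadd_left 0 0 z
    rw [add_zero] at h
    exact (left_eq_add.mp h)
  have hB0r : ∀ z : A, B z 0 = 0 := by
    intro z
    have h := hadd_right z 0 0
    rw [add_zero] at h
    exact (left_eq_add.mp h)
  -- antisymmetry: B a b = - B b a
  have hskew : ∀ a b : A, B a b = - B b a := by
    intro a b
    have h := hanti (a + b)
    rw [hadd_left, hadd_right, hadd_right, hanti, hanti, zero_add, add_zero] at h
    exact eq_neg_of_add_eq_zero_left h
  -- ring facts about v
  have hve : v * e = 0 := by rw [hv, mul_assoc, hge, mul_zero]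
  have hfv : f * v = v := by rw [hv, ← mul_assoc, ← mul_assoc, hf]
  -- op e • B e v = 0
  have key1 : op e • B e v = 0 := by
    have h := hder_right e v e
    rw [hve, hB0r, hanti, smul_zero, add_zero] at h
    exact h.symm
  -- e • B e v = B e v
  have heBev : e • B e v = B e v := by
    have h := hder_left e e v
    rw [he, key1, zero_add] at h
    exact h.symm
  -- B u v = op (x*f) • B e v + e • B (x*f) v
  have hexp : B u v = op (x * f) • B e v + e • B (x * f) v := by
    have h := hder_left e (x * f) v
    rw [← mul_assoc] at h
    exact h
  -- e • B u v = B u v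
  have heBuv : e • B u v = B u v := by
    rw [hexp, smul_add, smul_comm, heBev, smul_smul, he]
  -- B u v = e • op v • B u f
  have hstep : B u v = e • op v • B u f := by
    have h := hder_right u f v
    rw [hfv] at h
    calc B u v = e • B u v := heBuv.symm
      _ = e • (op v • B u f + f • B u v) := by rw [← h]
      _ = e • op v • B u f + (e * f) • B u v := by rw [smul_add, smul_smul]
      _ = e • op v • B u f := by rw [hef, zero_smul, add_zero]
  -- expand B u f
  have hBuf : B u f = op f • (op x • B e f + e • B x f) := by
    have h1 := hder_left (e * x) f f
    rw [hanti, smul_zero, add_zero, hder_left e x f] at h1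
    exact h1
  -- e • B f z = - op f • B e z  (from B (e*f) z = 0)
  have horth : ∀ z : A, e • B f z = - (op f • B e z) := by
    intro z
    have h := hder_left e f z
    rw [hef, hB0l] at h
    exact eq_neg_of_add_eq_zero_right h.symm
  -- e • B e f = 0
  have heBef : e • B e f = 0 := by
    rw [hskew e f, smul_neg, horth e, neg_neg, hanti, smul_zero]
  -- e • B x f = op f • B e x
  have hexf : e • B x f = op f • B e x := by
    rw [hskew x f, smul_neg, horth x, neg_neg]
  -- absorbing op f into op v
  have hopvf : ∀ m : M, op v • op f • m = op v • m := by
    intro m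
    rw [smul_smul, ← op_mul, hfv]
  calc B u v = e • op v • B u f := hstep
    _ = e • op v • op f • (op x • B e f + e • B x f) := by rw [hBuf]
    _ = e • op v • (op x • B e f + e • B x f) := by rw [hopvf]
    _ = e • (op v • op x • B e f) + e • (op v • e • B x f) := by
        rw [smul_add, smul_add]
    _ = op v • op x • (e • B e f) + e • op v • op f • B e x := by
        rw [smul_comm e (op v), smul_comm e (op x), hexf]
    _ = e • op v • B e x := by
        rw [heBef, smul_zero, smul_zero, zero_add, hopvf]
end

section
/- Let A be an associative unital ring, M an A-bimodule, and B an antisymmetric biderivation of A with values in M. Let e, f, g ∈ A be pairwise orthogonal idempotents. Then for all x, y ∈ A one has B(exf, gye) = −g·B(g,y)·e·x·f. -/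
open MulOpposite

/-- Let `B` be an antisymmetric biderivation of a unital ring `A` with values in
an `A`-bimodule `M`, and let `e, f, g` be pairwise orthogonal idempotents of `A`. Then
`B (e*x*f) (g*y*e) = -(g • B g y • (e*x*f))` for all `x, y ∈ A`. -/
theorem antisymm_bider_exf_gye
    {A M : Type*} [Ring A] [AddCommGroup M] [Module A M] [Module Aᵐᵒᵖ M]
    [SMulCommClass A Aᵐᵒᵖ M]
    (B : A → A → M)
    (hadd_left : ∀ x y z : A, B (x + y) z = B x z + B y z)
    (hadd_right : ∀ x y z : A, B x (y + z) = B x y + B x z)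
    (hder_left : ∀ x y z : A, B (x * y) z = op y • B x z + x • B y z)
    (hder_right : ∀ x y z : A, B x (y * z) = op z • B x y + y • B x z)
    (hanti : ∀ x : A, B x x = 0)
    (e f g : A) (he : e * e = e) (hf : f * f = f) (hg : g * g = g)
    (hef : e * f = 0) (hfe : f * e = 0)
    (heg : e * g = 0) (hge : g * e = 0)
    (hfg : f * g = 0) (hgf : g * f = 0) :
    ∀ x y : A, B (e * x * f) (g * y * e) = -(g • op (e * x * f) • B g y) := by
  haveI : SMulCommClass Aᵐᵒᵖ A M := SMulCommClass.symm A Aᵐᵒᵖ M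
  intro x y
  -- zero values
  have h0r : ∀ a : A, B a 0 = 0 := by
    intro a
    have h := hadd_right a 0 0
    rw [add_zero] at h
    exact (left_eq_add.mp h)
  have h0l : ∀ a : A, B 0 a = 0 := by
    intro a
    have h := hadd_left 0 0 a
    rw [add_zero] at h
    exact (left_eq_add.mp h)
  -- collapsing scalar lemmas
  have key_fe : ∀ m : M, op e • op f • m = 0 := by
    intro m; rw [smul_smul, ← op_mul, hfe, op_zero, zero_smul]
  have key_eg : ∀ m : M, e • (g * y) • m = 0 := by
    intro m; rw [smul_smul, ← mul_assoc, heg, zero_mul, zero_smul]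
  -- B between orthogonal idempotents vanishes
  have hBeg : B e g = 0 := by
    have h1 := hder_left e e g
    rw [he] at h1
    have h2 := hder_right e g e
    rw [hge, h0r, hanti, smul_zero, add_zero] at h2
    have h3 := hder_right e e g
    rw [heg, h0r, hanti, smul_zero, zero_add] at h3
    rw [← h2, ← h3, add_zero] at h1
    exact h1
  have hBfg : B f g = 0 := by
    have h1 := hder_left f f g
    rw [hf] at h1
    have h2 := hder_right f g f
    rw [hgf, h0r, hanti, smul_zero, add_zero] at h2
    have h3 := hder_right f f g
    rw [hfg, h0r, hanti, smul_zero, zero_add] at h3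
    rw [← h2, ← h3, add_zero] at h1
    exact h1
  -- key exchange identities from g*e = 0 and g*f = 0
  have hkey1 : g • B e y = -(op e • B g y) := by
    have h := hder_left g e y
    rw [hge, h0l] at h
    exact eq_neg_of_add_eq_zero_right h.symm
  have hkey2 : g • B f y = -(op f • B g y) := by
    have h := hder_left g f y
    rw [hgf, h0l] at h
    exact eq_neg_of_add_eq_zero_right h.symm
  -- pieces of the main expansion
  have A1 : B e ((g*y)*e) = op e • (g • B e y) := by
    rw [hder_right e (g*y) e, hder_right e g y, hBeg, smul_zero, zero_add, hanti,
      smul_zero, add_zero]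
  have A2 : e • B (x*f) ((g*y)*e) = 0 := by
    rw [hder_right (x*f) (g*y) e, hder_left x f (g*y), hder_right f g y, hBfg,
      smul_zero, zero_add, hkey2]
    rw [smul_add, smul_add, key_fe, zero_add, smul_neg, smul_neg, smul_comm (op e) x,
      key_fe, smul_zero, neg_zero, smul_zero, key_eg, add_zero]
  -- final right-multiplication absorption : (B g y)·(e x f) = g·(B g y)·(e x f)
  have hfinal : op (e*(x*f)) • B g y = g • op (e*(x*f)) • B g y := by
    have hdec : B g y = op g • B g y + g • B g y := by
      rw [← hder_left g g y, hg]
    conv_lhs => rw [hdec]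
    rw [smul_add, smul_smul, ← op_mul, ← mul_assoc, hge, zero_mul, op_zero, zero_smul,
      zero_add, smul_comm]
  -- main computation
  have idem_op : ∀ m : M, op e • op e • m = op e • m := by
    intro m; rw [smul_smul, ← op_mul, he]
  rw [mul_assoc, hder_left e (x*f) ((g*y)*e), A1, A2, add_zero, hkey1, smul_neg,
    smul_neg, idem_op, smul_smul, ← op_mul, hfinal, smul_smul g g, hg]
end

section
/- Let A be an associative unital ring, M an A-bimodule, and B an antisymmetric biderivation of A with values in M. Let e, f, g, h ∈ A be idempotents such that any two of them are either equal or orthogonal, and suppose that each of e and g is orthogonal to each of f and h. Then for all x, y ∈ A one has B(exf, gyh) = e·g·B(exf, gyh)·f·h. -/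
open MulOpposite

/-- Let `B` be an antisymmetric biderivation of a unital ring `A` with values in
an `A`-bimodule `M`, and let `e, f, g, h` be idempotents of `A` such that any two of them are
either equal or orthogonal, with each of `e` and `g` orthogonal to each of `f` and `h`. Then
`B (e*x*f) (g*y*h) = e • g • B (e*x*f) (g*y*h) • f • h` for all `x, y ∈ A`. -/
theorem antisymm_bider_exf_gyh
    {A M : Type*} [Ring A] [AddCommGroup M] [Module A M] [Module Aᵐᵒᵖ M]
    [SMulCommClass A Aᵐᵒᵖ M]
    (B : A → A → M)
    (hadd_left : ∀ x y z : A, B (x + y) z = B x z + B y z)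
    (hadd_right : ∀ x y z : A, B x (y + z) = B x y + B x z)
    (hder_left : ∀ x y z : A, B (x * y) z = op y • B x z + x • B y z)
    (hder_right : ∀ x y z : A, B x (y * z) = op z • B x y + y • B x z)
    (hanti : ∀ x : A, B x x = 0)
    (e f g h : A) (he : e * e = e) (hf : f * f = f) (hg : g * g = g) (hh : h * h = h)
    (hef2 : e = f ∨ (e * f = 0 ∧ f * e = 0))
    (heg2 : e = g ∨ (e * g = 0 ∧ g * e = 0))
    (heh2 : e = h ∨ (e * h = 0 ∧ h * e = 0))
    (hfg2 : f = g ∨ (f * g = 0 ∧ g * f = 0))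
    (hfh2 : f = h ∨ (f * h = 0 ∧ h * f = 0))
    (hgh2 : g = h ∨ (g * h = 0 ∧ h * g = 0))
    (hef : e * f = 0) (hfe : f * e = 0)
    (heh : e * h = 0) (hhe : h * e = 0)
    (hgf : g * f = 0) (hfg : f * g = 0)
    (hgh : g * h = 0) (hhg : h * g = 0) :
    ∀ x y : A, B (e * x * f) (g * y * h) =
      e • g • op h • op f • B (e * x * f) (g * y * h) := by
  have hB0l : ∀ z : A, B 0 z = 0 := by
    intro z
    have h1 := hadd_left 0 0 z
    rw [add_zero] at h1
    exact left_eq_add.mp h1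
  have hB0r : ∀ z : A, B z 0 = 0 := by
    intro z
    have h1 := hadd_right z 0 0
    rw [add_zero] at h1
    exact left_eq_add.mp h1
  intro x y
  have hue : e * (e * x * f) = e * x * f := by rw [← mul_assoc, ← mul_assoc, he]
  have hgv : g * (g * y * h) = g * y * h := by rw [← mul_assoc, ← mul_assoc, hg]
  have huf : (e * x * f) * f = e * x * f := by rw [mul_assoc, hf]
  have hvh : (g * y * h) * h = g * y * h := by rw [mul_assoc, hh]
  have hve : (g * y * h) * e = 0 := by rw [mul_assoc, hhe, mul_zero]
  have hug : (e * x * f) * g = 0 := by rw [mul_assoc, hfg, mul_zero]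
  have hfv : f * (g * y * h) = 0 := by rw [← mul_assoc, ← mul_assoc, hfg, zero_mul, zero_mul]
  have hhu : h * (e * x * f) = 0 := by rw [← mul_assoc, ← mul_assoc, hhe, zero_mul, zero_mul]
  have key1 : op e • B e (g * y * h) = 0 := by
    have h1 := hder_right e (g * y * h) e
    rw [hve, hanti e, smul_zero, add_zero, hB0r] at h1
    exact h1.symm
  have key2 : op g • B (e * x * f) g = 0 := by
    have h1 := hder_left (e * x * f) g g
    rw [hug, hanti g, smul_zero, add_zero, hB0l] at h1
    exact h1.symm
  have key3 : f • B f (g * y * h) = 0 := by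
    have h1 := hder_right f f (g * y * h)
    rw [hfv, hanti f, smul_zero, zero_add, hB0r] at h1
    exact h1.symm
  have key4 : h • B (e * x * f) h = 0 := by
    have h1 := hder_left h (e * x * f) h
    rw [hhu, hanti h, smul_zero, zero_add, hB0l] at h1
    exact h1.symm
  have step_e : B (e * x * f) (g * y * h) = e • B (e * x * f) (g * y * h) := by
    have h1 := hder_left e (e * x * f) (g * y * h)
    have z1 : op (e * x * f) • B e (g * y * h) = 0 := by
      rw [op_mul, op_mul, mul_smul, mul_smul, key1, smul_zero, smul_zero]
    rw [hue, z1, zero_add] at h1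
    exact h1
  have step_g : B (e * x * f) (g * y * h) = g • B (e * x * f) (g * y * h) := by
    have h1 := hder_right (e * x * f) g (g * y * h)
    have z2 : op (g * y * h) • B (e * x * f) g = 0 := by
      rw [op_mul, op_mul, mul_smul, mul_smul, key2, smul_zero, smul_zero]
    rw [hgv, z2, zero_add] at h1
    exact h1
  have step_f : B (e * x * f) (g * y * h) = op f • B (e * x * f) (g * y * h) := by
    have h1 := hder_left (e * x * f) f (g * y * h)
    have z3 : (e * x * f) • B f (g * y * h) = 0 := by
      rw [mul_smul, key3, smul_zero]
    rw [huf, z3, add_zero] at h1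
    exact h1
  have step_h : B (e * x * f) (g * y * h) = op h • B (e * x * f) (g * y * h) := by
    have h1 := hder_right (e * x * f) (g * y * h) h
    have z4 : (g * y * h) • B (e * x * f) h = 0 := by
      rw [mul_smul, key4, smul_zero]
    rw [hvh, z4, add_zero] at h1
    exact h1
  conv_rhs => rw [← step_f, ← step_h, ← step_g, ← step_e]
end

section
/- Let B be an R-bilinear antisymmetric biderivation of D with values in I(P,R). Then for all x ≤ y and u ≤ v in P there exists λ ∈ R such that B(e_{xy}, e_{uv}) = λ·[e_{xy}, e_{uv}]. -/
/-!
Write `e_a = e_{aa}`. Expanding products of the idempotents `e_a` with the Leibniz rules gives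
`B(e_w, e_z) = 0`, hence `B(e_a, e_{uv}) = e_u B(e_a, e_{uv}) e_v` is supported at `(u, v)`.
Expanding `B(e_a e_{xy}, e_{uv}) = 0` for `a ≠ x` and `B(e_{xy} e_b, e_{uv}) = 0` for `b ≠ y`
then kills most entries of `B(e_{xy}, e_{uv})`, and the swapped biderivation `(f, g) ↦ B(g, f)`
kills the same entries with the roles of the two arguments exchanged. What survives is the
`(x, v)` entry when `y = u`, the `(u, y)` entry when `x = v`, and nothing otherwise (when
`e_{xy} = e_{uv}`, by `B(f, f) = 0`): exactly the support of
`[e_{xy}, e_{uv}] = [y = u] e_{xv} - [x = v] e_{uy}`.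
-/

/-- The element `e_{xy}` of the incidence algebra: value `1` at `(x, y)` and `0` elsewhere. -/
def esingle (R : Type*) {P : Type*} [CommRing R] [PartialOrder P] [DecidableEq P]
    {x y : P} (_h : x ≤ y) : IncidenceAlgebra R P :=
  ⟨fun u v => if u = x ∧ v = y then 1 else 0, fun u v huv => by
    try dsimp only
    split_ifs with h'
    · obtain ⟨rfl, rfl⟩ := h'
      exact absurd _h huv
    · rfl⟩

/-- `D`: the `R`-span of the elements `e_{xy}`, `x ≤ y`, i.e. the finitely supported elements of
the incidence algebra. -/
def Dspan (R P : Type*) [CommRing R] [PartialOrder P] [DecidableEq P] :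
    Submodule R (IncidenceAlgebra R P) :=
  Submodule.span R {f : IncidenceAlgebra R P | ∃ (x y : P) (h : x ≤ y), f = esingle R h}

section esingle

variable {R P : Type*} [CommRing R] [PartialOrder P] [DecidableEq P]

@[simp] lemma esingle_apply {x y : P} (h : x ≤ y) (a b : P) :
    esingle R h a b = if a = x ∧ b = y then 1 else 0 := rfl

lemma esingle_mem_Dspan {x y : P} (h : x ≤ y) : esingle R h ∈ Dspan R P :=
  Submodule.subset_span ⟨x, y, h, rfl⟩

lemma eq_smul_esingle_of_apply_eq_zero {f : IncidenceAlgebra R P} {x y : P} (hxy : x ≤ y)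
    (hf : ∀ a b, a ≠ x ∨ b ≠ y → f a b = 0) : f = f x y • esingle R hxy := by
  ext a b
  by_cases hab : a = x ∧ b = y
  · obtain ⟨rfl, rfl⟩ := hab
    simp
  · rw [hf a b (not_and_or.mp hab), IncidenceAlgebra.constSMul_apply, esingle_apply,
      if_neg hab, smul_zero]

variable [LocallyFiniteOrder P]

lemma mul_esingle_apply (g : IncidenceAlgebra R P) {x y : P} (hxy : x ≤ y) (a b : P) :
    (g * esingle R hxy) a b = if b = y then g a x else 0 := by
  rw [IncidenceAlgebra.mul_apply, Finset.sum_eq_single x]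
  · by_cases hb : b = y <;> simp [hb]
  · intro z _ hz
    simp [hz]
  · intro hx
    by_cases hb : b = y
    · subst hb
      rw [Finset.mem_Icc, not_and_or, or_iff_left (not_not.mpr hxy)] at hx
      simp [IncidenceAlgebra.apply_eq_zero_of_not_le hx]
    · simp [hb]

lemma esingle_mul_apply (g : IncidenceAlgebra R P) {x y : P} (hxy : x ≤ y) (a b : P) :
    (esingle R hxy * g) a b = if a = x then g y b else 0 := by
  rw [IncidenceAlgebra.mul_apply, Finset.sum_eq_single y]
  · by_cases ha : a = x <;> simp [ha]
  · intro z _ hz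
    simp [hz]
  · intro hy
    by_cases ha : a = x
    · subst ha
      rw [Finset.mem_Icc, not_and_or, or_iff_right (not_not.mpr hxy)] at hy
      simp [IncidenceAlgebra.apply_eq_zero_of_not_le hy]
    · simp [ha]

lemma esingle_mul_esingle {x y z : P} (hxy : x ≤ y) (hyz : y ≤ z) :
    esingle R hxy * esingle R hyz = esingle R (hxy.trans hyz) := by
  ext a b
  rw [esingle_mul_apply]
  by_cases ha : a = x <;> simp [ha]

lemma esingle_mul_esingle_of_ne {x y z w : P} (hxy : x ≤ y) (hzw : z ≤ w) (hyz : y ≠ z) :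
    esingle R hxy * esingle R hzw = 0 := by
  ext a b
  rw [esingle_mul_apply]
  simp [hyz]

lemma commutator_esingle_esingle {x y z : P} (hxy : x ≤ y) (hyz : y ≤ z) (hxz : x ≠ z) :
    esingle R hxy * esingle R hyz - esingle R hyz * esingle R hxy = esingle R (hxy.trans hyz) := by
  rw [esingle_mul_esingle, esingle_mul_esingle_of_ne _ _ (Ne.symm hxz), sub_zero]

lemma apply_eq_zero_of_esingle_mul_eq_of_mul_esingle_eq {g : IncidenceAlgebra R P} {u v : P}
    (hu : esingle R (le_refl u) * g = g) (hv : g * esingle R (le_refl v) = g) {s t : P}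
    (hst : s ≠ u ∨ t ≠ v) : g s t = 0 := by
  rcases hst with hs | ht
  · rw [← hu, esingle_mul_apply, if_neg hs]
  · rw [← hv, mul_esingle_apply, if_neg ht]

end esingle

structure IsAntisymmBiderivation {R P : Type*} [CommRing R] [PartialOrder P]
    [LocallyFiniteOrder P] [DecidableEq P]
    (B : IncidenceAlgebra R P → IncidenceAlgebra R P → IncidenceAlgebra R P) : Prop where
  map_mul_left : ∀ f g h, f ∈ Dspan R P → g ∈ Dspan R P → h ∈ Dspan R P →
    B (f * g) h = B f h * g + f * B g h
  map_mul_right : ∀ f g h, f ∈ Dspan R P → g ∈ Dspan R P → h ∈ Dspan R P →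
    B f (g * h) = B f g * h + g * B f h
  map_self : ∀ f, f ∈ Dspan R P → B f f = 0

namespace IsAntisymmBiderivation

variable {R P : Type*} [CommRing R] [PartialOrder P] [LocallyFiniteOrder P] [DecidableEq P]
  {B : IncidenceAlgebra R P → IncidenceAlgebra R P → IncidenceAlgebra R P}

lemma swap (hB : IsAntisymmBiderivation B) : IsAntisymmBiderivation (fun f g => B g f) where
  map_mul_left f g h hf hg hh := hB.map_mul_right h f g hh hf hg
  map_mul_right f g h hf hg hh := hB.map_mul_left g h f hg hh hf
  map_self f hf := hB.map_self f hf

lemma map_zero_left (hB : IsAntisymmBiderivation B) {h : IncidenceAlgebra R P}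
    (hh : h ∈ Dspan R P) : B 0 h = 0 := by
  simpa using hB.map_mul_left 0 0 h (Submodule.zero_mem _) (Submodule.zero_mem _) hh

lemma map_esingle_refl_esingle_refl (hB : IsAntisymmBiderivation B) (w z : P) :
    B (esingle R (le_refl w)) (esingle R (le_refl z)) = 0 := by
  obtain rfl | hwz := eq_or_ne w z
  · exact hB.map_self _ (esingle_mem_Dspan _)
  have hw := esingle_mem_Dspan (R := R) (le_refl w)
  have hz := esingle_mem_Dspan (R := R) (le_refl z)
  -- `e_z e_z = e_z` splits `B(e_w, e_z)` into `B(e_w, e_z) e_z + e_z B(e_w, e_z)`, and both terms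
  -- vanish by expanding `B(e_w e_z, e_z)` and `B(e_z e_w, e_z)`, where `e_w e_z = e_z e_w = 0`.
  have hmul_ez := hB.map_mul_left _ _ _ hw hz hz
  have hez_mul := hB.map_mul_left _ _ _ hz hw hz
  have hsplit := hB.map_mul_right _ _ _ hw hz hz
  rw [esingle_mul_esingle_of_ne _ _ hwz, hB.map_zero_left hz, hB.map_self _ hz, mul_zero,
    add_zero] at hmul_ez
  rw [esingle_mul_esingle_of_ne _ _ hwz.symm, hB.map_zero_left hz, hB.map_self _ hz, zero_mul,
    zero_add] at hez_mul
  rwa [esingle_mul_esingle, ← hmul_ez, ← hez_mul, add_zero] at hsplit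

lemma map_esingle_refl_apply_eq_zero (hB : IsAntisymmBiderivation B) (a : P) {u v : P}
    (huv : u ≤ v) {s t : P} (hst : s ≠ u ∨ t ≠ v) :
    B (esingle R (le_refl a)) (esingle R huv) s t = 0 := by
  have ha := esingle_mem_Dspan (R := R) (le_refl a)
  refine apply_eq_zero_of_esingle_mul_eq_of_mul_esingle_eq ?_ ?_ hst
  · have h := hB.map_mul_right _ _ _ ha (esingle_mem_Dspan (le_refl u)) (esingle_mem_Dspan huv)
    rwa [esingle_mul_esingle, hB.map_esingle_refl_esingle_refl, zero_mul, zero_add, eq_comm] at h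
  · have h := hB.map_mul_right _ _ _ ha (esingle_mem_Dspan huv) (esingle_mem_Dspan (le_refl v))
    rwa [esingle_mul_esingle, hB.map_esingle_refl_esingle_refl, mul_zero, add_zero, eq_comm] at h

lemma map_esingle_esingle_apply_eq_zero_of_ne_left (hB : IsAntisymmBiderivation B) {x y u v : P}
    (hxy : x ≤ y) (huv : u ≤ v) {a : P} (b : P) (hax : a ≠ x) (h : a ≠ u ∨ x ≠ v) :
    B (esingle R hxy) (esingle R huv) a b = 0 := by
  have hmul := hB.map_mul_left _ _ _ (esingle_mem_Dspan (le_refl a)) (esingle_mem_Dspan hxy)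
    (esingle_mem_Dspan huv)
  rw [esingle_mul_esingle_of_ne _ _ hax, hB.map_zero_left (esingle_mem_Dspan huv)] at hmul
  have hab := congrArg (· a b) hmul
  rw [IncidenceAlgebra.zero_apply, IncidenceAlgebra.add_apply, mul_esingle_apply,
    esingle_mul_apply, if_pos rfl, hB.map_esingle_refl_apply_eq_zero a huv h, ite_self,
    zero_add] at hab
  exact hab.symm

lemma map_esingle_esingle_apply_eq_zero_of_ne_right (hB : IsAntisymmBiderivation B)
    {x y u v : P} (hxy : x ≤ y) (huv : u ≤ v) (a : P) {b : P} (hby : b ≠ y)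
    (h : y ≠ u ∨ b ≠ v) :
    B (esingle R hxy) (esingle R huv) a b = 0 := by
  have hmul := hB.map_mul_left _ _ _ (esingle_mem_Dspan hxy) (esingle_mem_Dspan (le_refl b))
    (esingle_mem_Dspan huv)
  rw [esingle_mul_esingle_of_ne _ _ hby.symm, hB.map_zero_left (esingle_mem_Dspan huv)] at hmul
  have hab := congrArg (· a b) hmul
  rw [IncidenceAlgebra.zero_apply, IncidenceAlgebra.add_apply, mul_esingle_apply, if_pos rfl,
    esingle_mul_apply, hB.map_esingle_refl_apply_eq_zero b huv h, ite_self, add_zero] at hab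
  exact hab.symm

lemma map_esingle_esingle_eq_smul_esingle (hB : IsAntisymmBiderivation B) {x y z : P}
    (hxy : x ≤ y) (hyz : y ≤ z) (hxz : x ≠ z) :
    B (esingle R hxy) (esingle R hyz) =
      B (esingle R hxy) (esingle R hyz) x z • esingle R (hxy.trans hyz) :=
  eq_smul_esingle_of_apply_eq_zero _ fun a b hab => by
    rcases hab with hax | hbz
    · exact hB.map_esingle_esingle_apply_eq_zero_of_ne_left hxy hyz b hax (Or.inr hxz)
    · exact hB.swap.map_esingle_esingle_apply_eq_zero_of_ne_right hyz hxy a hbz (Or.inl hxz.symm)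

lemma map_esingle_esingle_eq_zero (hB : IsAntisymmBiderivation B) {x y u v : P}
    (hxy : x ≤ y) (huv : u ≤ v) (hyu : y ≠ u) (hxv : x ≠ v) :
    B (esingle R hxy) (esingle R huv) = 0 := by
  ext a b _
  obtain hax | rfl := ne_or_eq a x
  · exact hB.map_esingle_esingle_apply_eq_zero_of_ne_left hxy huv b hax (Or.inr hxv)
  obtain hby | rfl := ne_or_eq b y
  · exact hB.map_esingle_esingle_apply_eq_zero_of_ne_right hxy huv a hby (Or.inl hyu)
  obtain hau | rfl := ne_or_eq a u
  · exact hB.swap.map_esingle_esingle_apply_eq_zero_of_ne_left huv hxy b hau (Or.inr hyu.symm)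
  obtain hbv | rfl := ne_or_eq b v
  · exact hB.swap.map_esingle_esingle_apply_eq_zero_of_ne_right huv hxy a hbv (Or.inl hxv.symm)
  exact congrArg (· a b) (hB.map_self _ (esingle_mem_Dspan hxy))

end IsAntisymmBiderivation

theorem bider_on_esingle_eq_smul_commutator_general
    {R P : Type*} [CommRing R] [PartialOrder P] [LocallyFiniteOrder P] [DecidableEq P]
    (B : IncidenceAlgebra R P → IncidenceAlgebra R P → IncidenceAlgebra R P)
    (hder_l : ∀ f g h, f ∈ Dspan R P → g ∈ Dspan R P → h ∈ Dspan R P →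
      B (f * g) h = B f h * g + f * B g h)
    (hder_r : ∀ f g h, f ∈ Dspan R P → g ∈ Dspan R P → h ∈ Dspan R P →
      B f (g * h) = B f g * h + g * B f h)
    (hanti : ∀ f, f ∈ Dspan R P → B f f = 0)
    {x y u v : P} (hxy : x ≤ y) (huv : u ≤ v) :
    ∃ lb : R, B (esingle R hxy) (esingle R huv) =
      lb • (esingle R hxy * esingle R huv - esingle R huv * esingle R hxy) := by
  have hB : IsAntisymmBiderivation B := ⟨hder_l, hder_r, hanti⟩
  obtain rfl | hyu := eq_or_ne y u <;> obtain rfl | hxv := eq_or_ne x v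
  · obtain rfl := le_antisymm hxy huv
    exact ⟨0, by rw [zero_smul]; exact hB.map_self _ (esingle_mem_Dspan hxy)⟩
  · refine ⟨B (esingle R hxy) (esingle R huv) x v, ?_⟩
    rw [commutator_esingle_esingle hxy huv hxv]
    exact hB.map_esingle_esingle_eq_smul_esingle hxy huv hxv
  · refine ⟨-B (esingle R hxy) (esingle R huv) u y, ?_⟩
    rw [← neg_sub, commutator_esingle_esingle huv hxy hyu.symm, smul_neg, neg_smul, neg_neg]
    exact hB.swap.map_esingle_esingle_eq_smul_esingle huv hxy hyu.symm
  · exact ⟨0, by rw [zero_smul]; exact hB.map_esingle_esingle_eq_zero hxy huv hyu hxv⟩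

/-- If `B` is an `R`-bilinear antisymmetric biderivation of
`D = span {e_{xy}}` with values in `I(P,R)`, then for all `x ≤ y` and `u ≤ v` there is `λ ∈ R`
with `B(e_{xy}, e_{uv}) = λ • [e_{xy}, e_{uv}]`. -/
theorem bider_on_esingle_eq_smul_commutator
    {R P : Type*} [CommRing R] [PartialOrder P] [LocallyFiniteOrder P] [DecidableEq P]
    (B : IncidenceAlgebra R P → IncidenceAlgebra R P → IncidenceAlgebra R P)
    (hadd_l : ∀ f g h, f ∈ Dspan R P → g ∈ Dspan R P → h ∈ Dspan R P →
      B (f + g) h = B f h + B g h)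
    (hadd_r : ∀ f g h, f ∈ Dspan R P → g ∈ Dspan R P → h ∈ Dspan R P →
      B f (g + h) = B f g + B f h)
    (hsmul_l : ∀ (r : R) (f h), f ∈ Dspan R P → h ∈ Dspan R P → B (r • f) h = r • B f h)
    (hsmul_r : ∀ (r : R) (f h), f ∈ Dspan R P → h ∈ Dspan R P → B f (r • h) = r • B f h)
    (hder_l : ∀ f g h, f ∈ Dspan R P → g ∈ Dspan R P → h ∈ Dspan R P →
      B (f * g) h = B f h * g + f * B g h)
    (hder_r : ∀ f g h, f ∈ Dspan R P → g ∈ Dspan R P → h ∈ Dspan R P →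
      B f (g * h) = B f g * h + g * B f h)
    (hanti : ∀ f, f ∈ Dspan R P → B f f = 0)
    {x y u v : P} (hxy : x ≤ y) (huv : u ≤ v) :
    ∃ lb : R, B (esingle R hxy) (esingle R huv) =
      lb • (esingle R hxy * esingle R huv - esingle R huv * esingle R hxy) :=
  bider_on_esingle_eq_smul_commutator_general B hder_l hder_r hanti hxy huv
end

section
/- Let B be an R-bilinear antisymmetric biderivation of D with values in I(P,R). Then: (a) for all x < y in P, B(e_x, e_{xy}) = B(e_{xy}, e_y); (b) for all x < y < z in P, B(e_{xy}, e_{yz}) = B(e_x, e_{xy})(x,y) · e_{xz} (the scalar B(e_x,e_{xy})(x,y) ∈ R times e_{xz}). -/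
/-! For `x < y` put `e = e_x`, `e' = e_y`, `u = e_{xy}`: orthogonal idempotents with
`e' A e = 0`, and `u ∈ e A e'`.  The derivation laws alone give `B(e, u) = B(e, u) e'` and
`B(u, e') = e B(u, e')`, so expanding `0 = B(e e', u) = B(e, u) e' - e B(u, e')` yields (a).
For (b), `e_y B(e_{xy}, e_{yz}) = 0` because `e_{xy} = e_x e_{xy}` and `e_y A e_x = 0`; hence
`B(e_{xy}, e_{yz}) = B(e_{xy}, e_y) e_{yz} = B(e_x, e_{xy}) e_{yz}`, and finally
`B(e_x, e_{xy}) = e_x B(e_x, e_{xy}) e_y = B(e_x, e_{xy})(x, y) e_{xy}`. -/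

structure IsAntisymmBiderivationOn {A : Type*} [Ring A] (S : AddSubmonoid A)
    (B : A → A → A) : Prop where
  map_add_left : ∀ f g h, f ∈ S → g ∈ S → h ∈ S → B (f + g) h = B f h + B g h
  map_add_right : ∀ f g h, f ∈ S → g ∈ S → h ∈ S → B f (g + h) = B f g + B f h
  map_mul_left : ∀ f g h, f ∈ S → g ∈ S → h ∈ S → B (f * g) h = B f h * g + f * B g h
  map_mul_right : ∀ f g h, f ∈ S → g ∈ S → h ∈ S → B f (g * h) = B f g * h + g * B f h
  map_self : ∀ f, f ∈ S → B f f = 0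

namespace IsAntisymmBiderivationOn

variable {A : Type*} [Ring A] {S : AddSubmonoid A} {B : A → A → A}
  {e e' u v : A}

theorem map_zero_left (hB : IsAntisymmBiderivationOn S B) (hu : u ∈ S) : B 0 u = 0 := by
  have h := hB.map_add_left 0 0 u S.zero_mem S.zero_mem hu
  rw [add_zero] at h
  exact left_eq_add.mp h

theorem map_swap (hB : IsAntisymmBiderivationOn S B) (hu : u ∈ S) (hv : v ∈ S) :
    B v u = -B u v := by
  have h := hB.map_self (u + v) (S.add_mem hu hv)
  rw [hB.map_add_right _ _ _ (S.add_mem hu hv) hu hv, hB.map_add_left _ _ _ hu hv hu,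
    hB.map_add_left _ _ _ hu hv hv, hB.map_self u hu, hB.map_self v hv, zero_add,
    add_zero] at h
  exact eq_neg_of_add_eq_zero_left h

theorem mul_map_left_eq (hB : IsAntisymmBiderivationOn S B) (he : e ∈ S) (hu : u ∈ S)
    (heu : e * u = u) : e * B e u = B e u := by
  have h := hB.map_mul_right e e u he he hu
  rwa [heu, hB.map_self e he, zero_mul, zero_add, eq_comm] at h

theorem map_left_mul_eq (hB : IsAntisymmBiderivationOn S B) (he : e ∈ S) (he' : e' ∈ S)
    (hu : u ∈ S) (hee : e * e = e) (hue' : u * e' = u) (hue : ∀ a, u * a * e = 0) :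
    B e u * e' = B e u := by
  have hcross : u * B e e' = 0 := by
    have h := hB.map_mul_left e e e' he he he'
    rw [hee] at h
    have hue0 : u * e = 0 := by simpa using hue 1
    rw [h, mul_add, ← mul_assoc, ← mul_assoc, hue, hue0, zero_mul, add_zero]
  have h := hB.map_mul_right e u e' he hu he'
  rw [hue', hcross, add_zero] at h
  exact h.symm

theorem mul_map_right_eq (hB : IsAntisymmBiderivationOn S B) (he : e ∈ S) (he' : e' ∈ S)
    (hu : u ∈ S) (he'e' : e' * e' = e') (heu : e * u = u) (he'u : ∀ a, e' * a * u = 0) :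
    e * B u e' = B u e' := by
  have hcross : B e e' * u = 0 := by
    have h := hB.map_mul_right e e' e' he he' he'
    rw [he'e'] at h
    have he'u0 : e' * u = 0 := by simpa using he'u 1
    rw [h, add_mul, mul_assoc, he'u0, mul_zero, he'u, zero_add]
  have h := hB.map_mul_left e u e' he hu he'
  rw [heu, hcross, zero_add] at h
  exact h.symm

theorem map_left_eq_map_right (hB : IsAntisymmBiderivationOn S B) (he : e ∈ S)
    (he' : e' ∈ S) (hu : u ∈ S) (hee : e * e = e) (he'e' : e' * e' = e') (hee' : e * e' = 0)
    (heu : e * u = u) (hue' : u * e' = u) (hue : ∀ a, u * a * e = 0)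
    (he'u : ∀ a, e' * a * u = 0) : B e u = B u e' := by
  have h := hB.map_mul_left e e' u he he' hu
  rw [hee', hB.map_zero_left hu, hB.map_swap hu he', mul_neg,
    hB.map_left_mul_eq he he' hu hee hue' hue,
    hB.mul_map_right_eq he he' hu he'e' heu he'u,
    ← sub_eq_add_neg, eq_comm, sub_eq_zero] at h
  exact h

theorem map_eq_map_mul (hB : IsAntisymmBiderivationOn S B) (he : e ∈ S)
    (he' : e' ∈ S) (hu : u ∈ S) (hv : v ∈ S) (heu : e * u = u) (he'v : e' * v = v)
    (he'e : ∀ a, e' * a * e = 0) : B u v = B u e' * v := by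
  have hcross : e' * B u v = 0 := by
    have h := hB.map_mul_left e u v he hu hv
    rw [heu] at h
    have he'e0 : e' * e = 0 := by simpa using he'e 1
    rw [h, mul_add, ← heu, ← mul_assoc, ← mul_assoc, ← mul_assoc, he'e, he'e0, zero_mul,
      zero_mul, add_zero]
  have h := hB.map_mul_right u e' v hu he' hv
  rwa [he'v, hcross, add_zero] at h

end IsAntisymmBiderivationOn

section IncidenceAlgebra

variable {R P : Type*} [CommRing R] [PartialOrder P] [DecidableEq P] {a b c d : P}

theorem esingle_mem_Dspan_s7 (hab : a ≤ b) : esingle R hab ∈ Dspan R P :=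
  Submodule.subset_span ⟨a, b, hab, rfl⟩

variable [LocallyFiniteOrder P]

theorem esingle_mul_mul_esingle (hab : a ≤ b) (hbc : b ≤ c) (hcd : c ≤ d)
    (f : IncidenceAlgebra R P) :
    esingle R hab * f * esingle R hcd = f b c • esingle R (hab.trans (hbc.trans hcd)) := by
  ext u v
  by_cases hu : u = a
  · subst hu
    by_cases hv : v = d
    · subst hv
      simp [esingle, Finset.sum_ite_eq', hab, hcd, hbc, hab.trans hbc]
    · simp [esingle, hv]
  · simp [esingle, hu]

theorem esingle_mul_mul_esingle_of_not_le (hab : a ≤ b) (hcd : c ≤ d) (hbc : ¬b ≤ c)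
    (f : IncidenceAlgebra R P) : esingle R hab * f * esingle R hcd = 0 := by
  ext u v
  by_cases hu : u = a
  · subst hu
    by_cases hv : v = d
    · subst hv
      simp [esingle, Finset.sum_ite_eq', hab, hcd, hbc]
    · simp [esingle, hv]
  · simp [esingle, hu]

theorem esingle_mul_esingle_s7 (hab : a ≤ b) (hbc : b ≤ c) :
    esingle R hab * esingle R hbc = esingle R (hab.trans hbc) := by
  simpa using esingle_mul_mul_esingle hab le_rfl hbc (1 : IncidenceAlgebra R P)

theorem esingle_mul_esingle_of_ne_s7 (hab : a ≤ b) (hcd : c ≤ d) (hbc : b ≠ c) :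
    esingle R hab * esingle R hcd = 0 := by
  by_cases hle : b ≤ c
  · simpa [hbc] using esingle_mul_mul_esingle hab hle hcd (1 : IncidenceAlgebra R P)
  · simpa using esingle_mul_mul_esingle_of_not_le hab hcd hle (1 : IncidenceAlgebra R P)

end IncidenceAlgebra

theorem bider_esingle_relations_general
    {R P : Type*} [CommRing R] [PartialOrder P] [LocallyFiniteOrder P] [DecidableEq P]
    (B : IncidenceAlgebra R P → IncidenceAlgebra R P → IncidenceAlgebra R P)
    (hadd_l : ∀ f g h, f ∈ Dspan R P → g ∈ Dspan R P → h ∈ Dspan R P →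
      B (f + g) h = B f h + B g h)
    (hadd_r : ∀ f g h, f ∈ Dspan R P → g ∈ Dspan R P → h ∈ Dspan R P →
      B f (g + h) = B f g + B f h)
    (hder_l : ∀ f g h, f ∈ Dspan R P → g ∈ Dspan R P → h ∈ Dspan R P →
      B (f * g) h = B f h * g + f * B g h)
    (hder_r : ∀ f g h, f ∈ Dspan R P → g ∈ Dspan R P → h ∈ Dspan R P →
      B f (g * h) = B f g * h + g * B f h)
    (hanti : ∀ f, f ∈ Dspan R P → B f f = 0)
    :
    (∀ (x y : P) (hxy : x < y),
      B (esingle R (le_refl x)) (esingle R hxy.le) =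
        B (esingle R hxy.le) (esingle R (le_refl y))) ∧
    (∀ (x y z : P) (hxy : x < y) (hyz : y < z),
      B (esingle R hxy.le) (esingle R hyz.le) =
        (B (esingle R (le_refl x)) (esingle R hxy.le)) x y •
          esingle R (hxy.trans hyz).le) := by
  have hB : IsAntisymmBiderivationOn (Dspan R P).toAddSubmonoid B :=
    ⟨hadd_l, hadd_r, hder_l, hder_r, hanti⟩
  have mem {a b : P} (hab : a ≤ b) : esingle R hab ∈ (Dspan R P).toAddSubmonoid :=
    esingle_mem_Dspan_s7 hab
  have idem (a : P) : esingle R (le_refl a) * esingle R (le_refl a) = esingle R (le_refl a) :=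
    esingle_mul_esingle_s7 _ _
  have part_a (x y : P) (hxy : x < y) :
      B (esingle R (le_refl x)) (esingle R hxy.le) =
        B (esingle R hxy.le) (esingle R (le_refl y)) :=
    hB.map_left_eq_map_right (mem _) (mem _) (mem _) (idem x) (idem y)
      (esingle_mul_esingle_of_ne_s7 _ _ hxy.ne) (esingle_mul_esingle_s7 _ _)
      (esingle_mul_esingle_s7 _ _) (esingle_mul_mul_esingle_of_not_le _ _ hxy.not_ge)
      (esingle_mul_mul_esingle_of_not_le _ _ hxy.not_ge)
  refine ⟨part_a, fun x y z hxy hyz => ?_⟩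
  calc B (esingle R hxy.le) (esingle R hyz.le)
      = B (esingle R hxy.le) (esingle R (le_refl y)) * esingle R hyz.le :=
        hB.map_eq_map_mul (mem (le_refl x)) (mem _) (mem _) (mem _)
          (esingle_mul_esingle_s7 _ _) (esingle_mul_esingle_s7 _ _)
          (esingle_mul_mul_esingle_of_not_le _ _ hxy.not_ge)
    _ = esingle R (le_refl x) * B (esingle R (le_refl x)) (esingle R hxy.le) *
          esingle R (le_refl y) * esingle R hyz.le := by
        rw [← part_a x y hxy, mul_assoc (esingle R (le_refl x)),
          hB.map_left_mul_eq (mem _) (mem _) (mem _) (idem x) (esingle_mul_esingle_s7 _ _)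
            (esingle_mul_mul_esingle_of_not_le _ _ hxy.not_ge),
          hB.mul_map_left_eq (mem _) (mem _) (esingle_mul_esingle_s7 _ _)]
    _ = _ := by
        rw [esingle_mul_mul_esingle le_rfl hxy.le le_rfl, smul_mul_assoc, esingle_mul_esingle_s7]

/-- For an `R`-bilinear antisymmetric biderivation `B` of `D` with values in
`I(P,R)`: (a) `B(e_x, e_{xy}) = B(e_{xy}, e_y)` for `x < y`; and (b)
`B(e_{xy}, e_{yz}) = B(e_x, e_{xy})(x,y) • e_{xz}` for `x < y < z`. -/
theorem bider_esingle_relations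
    {R P : Type*} [CommRing R] [PartialOrder P] [LocallyFiniteOrder P] [DecidableEq P]
    (B : IncidenceAlgebra R P → IncidenceAlgebra R P → IncidenceAlgebra R P)
    (hadd_l : ∀ f g h, f ∈ Dspan R P → g ∈ Dspan R P → h ∈ Dspan R P →
      B (f + g) h = B f h + B g h)
    (hadd_r : ∀ f g h, f ∈ Dspan R P → g ∈ Dspan R P → h ∈ Dspan R P →
      B f (g + h) = B f g + B f h)
    (hsmul_l : ∀ (r : R) (f h), f ∈ Dspan R P → h ∈ Dspan R P → B (r • f) h = r • B f h)
    (hsmul_r : ∀ (r : R) (f h), f ∈ Dspan R P → h ∈ Dspan R P → B f (r • h) = r • B f h)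
    (hder_l : ∀ f g h, f ∈ Dspan R P → g ∈ Dspan R P → h ∈ Dspan R P →
      B (f * g) h = B f h * g + f * B g h)
    (hder_r : ∀ f g h, f ∈ Dspan R P → g ∈ Dspan R P → h ∈ Dspan R P →
      B f (g * h) = B f g * h + g * B f h)
    (hanti : ∀ f, f ∈ Dspan R P → B f f = 0)
    :
    (∀ (x y : P) (hxy : x < y),
      B (esingle R (le_refl x)) (esingle R hxy.le) =
        B (esingle R hxy.le) (esingle R (le_refl y))) ∧
    (∀ (x y z : P) (hxy : x < y) (hyz : y < z),
      B (esingle R hxy.le) (esingle R hyz.le) =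
        (B (esingle R (le_refl x)) (esingle R hxy.le)) x y •
          esingle R (hxy.trans hyz).le) :=
  bider_esingle_relations_general B hadd_l hadd_r hder_l hder_r hanti
end

section
/- Let B be an R-bilinear antisymmetric biderivation of I(P,R). Then there exists a map σ, assigning to each pair x < y in P an element σ(x,y) ∈ R and constant on chains, such that for all f, g ∈ I(P,R): B(f,g)(x,x) = 0 for all x ∈ P, and B(f,g)(x,y) = σ(x,y)·[f,g](x,y) for all x < y in P. -/
open Finset

namespace BiderAux

open scoped Classical

variable {R P : Type*} [CommRing R] [PartialOrder P] [LocallyFiniteOrder P] [DecidableEq P]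

/-- The matrix-unit element of the incidence algebra: `1` at `(u,v)` (when `u ≤ v`), `0`
elsewhere. -/
noncomputable def E (R : Type*) [CommRing R] {P : Type*} [PartialOrder P] [DecidableEq P]
    (u v : P) :
    IncidenceAlgebra R P :=
  ⟨fun a b => if a = u ∧ b = v ∧ a ≤ b then (1 : R) else 0,
    fun a b hab => if_neg fun h => hab h.2.2⟩

lemma E_apply (u v a b : P) :
    E R u v a b = if a = u ∧ b = v ∧ a ≤ b then (1 : R) else 0 := rfl

lemma E_same {u v : P} (h : u ≤ v) : E R u v u v = 1 := by
  rw [E_apply, if_pos ⟨rfl, rfl, h⟩]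

lemma E_ne_left {u v a b : P} (h : a ≠ u) : E R u v a b = 0 := by
  rw [E_apply, if_neg fun hc => h hc.1]

lemma E_ne_right {u v a b : P} (h : b ≠ v) : E R u v a b = 0 := by
  rw [E_apply, if_neg fun hc => h hc.2.1]

lemma mulE (f : IncidenceAlgebra R P) (u v a b : P) :
    (f * E R u v) a b = if b = v ∧ u ∈ Icc a b then f a u else 0 := by
  rw [IncidenceAlgebra.mul_apply]
  by_cases h : b = v ∧ u ∈ Icc a b
  · rw [if_pos h]
    rw [Finset.sum_eq_single u]
    · have hub : u ≤ b := (mem_Icc.1 h.2).2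
      rw [E_apply, if_pos ⟨rfl, h.1, hub⟩, mul_one]
    · intro z _ hzu
      rw [E_ne_left hzu, mul_zero]
    · intro hu; exact absurd h.2 hu
  · rw [if_neg h]
    refine Finset.sum_eq_zero fun z hz => ?_
    rw [E_apply]
    rcases Classical.em (z = u ∧ b = v ∧ z ≤ b) with hc | hc
    · exact absurd ⟨hc.2.1, hc.1 ▸ hz⟩ h
    · rw [if_neg hc, mul_zero]

lemma Emul (g : IncidenceAlgebra R P) (u v a b : P) :
    (E R u v * g) a b = if a = u ∧ v ∈ Icc a b then g v b else 0 := by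
  rw [IncidenceAlgebra.mul_apply]
  by_cases h : a = u ∧ v ∈ Icc a b
  · rw [if_pos h]
    rw [Finset.sum_eq_single v]
    · have hav : a ≤ v := (mem_Icc.1 h.2).1
      rw [E_apply, if_pos ⟨h.1, rfl, hav⟩, one_mul]
    · intro z _ hzv
      rw [E_ne_right hzv, zero_mul]
    · intro hv; exact absurd h.2 hv
  · rw [if_neg h]
    refine Finset.sum_eq_zero fun z hz => ?_
    rw [E_apply]
    rcases Classical.em (a = u ∧ z = v ∧ a ≤ z) with hc | hc
    · exact absurd ⟨hc.1, hc.2.1 ▸ hz⟩ h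
    · rw [if_neg hc, zero_mul]

lemma E_mul_E {u v w : P} (huv : u ≤ v) (hvw : v ≤ w) :
    (E R u v : IncidenceAlgebra R P) * E R v w = E R u w := by
  ext a b hab
  rw [Emul]
  by_cases h : a = u ∧ v ∈ Icc a b
  · rw [if_pos h, E_apply, E_apply]
    by_cases hbw : b = w
    · rw [if_pos ⟨rfl, hbw, (mem_Icc.1 h.2).2⟩, if_pos ⟨h.1, hbw, hab⟩]
    · rw [if_neg fun hc => hbw hc.2.1, if_neg fun hc => hbw hc.2.1]
  · rw [if_neg h, E_apply, if_neg]
    rintro ⟨rfl, rfl, -⟩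
    exact h ⟨rfl, mem_Icc.2 ⟨huv, hvw⟩⟩

lemma sandwich (f : IncidenceAlgebra R P) (x y : P) :
    E R x x * f * E R y y = f x y • E R x y := by
  ext a b hab
  rw [IncidenceAlgebra.constSMul_apply, smul_eq_mul, mulE]
  by_cases h1 : b = y ∧ y ∈ Icc a b
  · rw [if_pos h1, Emul]
    by_cases h2 : a = x ∧ x ∈ Icc a y
    · rw [if_pos h2]
      obtain ⟨rfl, hx2⟩ := h2
      obtain ⟨rfl, hy1⟩ := h1
      rw [E_same hab, mul_one]
    · rw [if_neg h2]
      symm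
      rcases Classical.em (a = x) with rfl | hax
      · rw [E_ne_right (R := R)
          (fun hby => h2 ⟨rfl, mem_Icc.2 ⟨le_refl _, hab.trans_eq hby⟩⟩), mul_zero]
      · rw [E_ne_left (R := R) hax, mul_zero]
  · rw [if_neg h1]
    symm
    rcases Classical.em (b = y) with rfl | hby
    · exact absurd ⟨rfl, mem_Icc.2 ⟨hab, le_refl b⟩⟩ h1
    · rw [E_ne_right (R := R) hby, mul_zero]


lemma app2 {f g : IncidenceAlgebra R P} (h : f = g) (a b : P) : f a b = g a b := by rw [h]

/-- Bundle of the biderivation hypotheses. -/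
structure IsBider (B : IncidenceAlgebra R P → IncidenceAlgebra R P → IncidenceAlgebra R P) :
    Prop where
  hadd_l : ∀ f g h, B (f + g) h = B f h + B g h
  hadd_r : ∀ f g h, B f (g + h) = B f g + B f h
  hsmul_l : ∀ (r : R) (f g), B (r • f) g = r • B f g
  hsmul_r : ∀ (r : R) (f g), B f (r • g) = r • B f g
  hder_l : ∀ f g h, B (f * g) h = B f h * g + f * B g h
  hder_r : ∀ f g h, B f (g * h) = B f g * h + g * B f h
  hanti : ∀ f, B f f = 0

variable {B : IncidenceAlgebra R P → IncidenceAlgebra R P → IncidenceAlgebra R P}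

/-- The scalar `σ(x,y) = B(e_xx, e_xy)(x,y)`. -/
noncomputable def sig (B : IncidenceAlgebra R P → IncidenceAlgebra R P → IncidenceAlgebra R P)
    (x y : P) : R := B (E R x x) (E R x y) x y

lemma skew (hB : IsBider B) (f g : IncidenceAlgebra R P) : B f g = - B g f := by
  have h := hB.hanti (f + g)
  rw [hB.hadd_l, hB.hadd_r, hB.hadd_r, hB.hanti f, hB.hanti g, zero_add, add_zero] at h
  exact eq_neg_of_add_eq_zero_left h

lemma rowcol_l (hB : IsBider B) (g : IncidenceAlgebra R P) (x a b : P)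
    (ha : a ≠ x) (hb : b ≠ x) : B (E R x x) g a b = 0 := by
  have h := hB.hder_l (E R x x) (E R x x) g
  rw [E_mul_E (le_refl x) (le_refl x)] at h
  have h2 := app2 h a b
  rw [IncidenceAlgebra.add_apply, mulE, Emul, if_neg (fun hc => hb hc.1),
    if_neg (fun hc => ha hc.1), add_zero] at h2
  exact h2

lemma rowcol_r (hB : IsBider B) (f : IncidenceAlgebra R P) (y a b : P)
    (ha : a ≠ y) (hb : b ≠ y) : B f (E R y y) a b = 0 := by
  have h := hB.hder_r f (E R y y) (E R y y)
  rw [E_mul_E (le_refl y) (le_refl y)] at h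
  have h2 := app2 h a b
  rw [IncidenceAlgebra.add_apply, mulE, Emul, if_neg (fun hc => hb hc.1),
    if_neg (fun hc => ha hc.1), add_zero] at h2
  exact h2

lemma diagE (hB : IsBider B) (g : IncidenceAlgebra R P) (x : P) : B (E R x x) g x x = 0 := by
  have h := hB.hder_l (E R x x) (E R x x) g
  rw [E_mul_E (le_refl x) (le_refl x)] at h
  have h2 := app2 h x x
  rw [IncidenceAlgebra.add_apply, mulE, Emul,
    if_pos ⟨rfl, mem_Icc.2 ⟨le_refl x, le_refl x⟩⟩] at h2
  linear_combination -h2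

lemma expandL (hB : IsBider B) (f g : IncidenceAlgebra R P) (x y : P) (hxy : x ≤ y) :
    B f g x y = f x y * B (E R x y) g x y
      - (∑ z ∈ Icc x y, B (E R x x) g x z * f z y)
      - ∑ z ∈ Icc x y, f x z * B (E R y y) g z y := by
  have hyIcc : y ∈ Icc x y := mem_Icc.2 ⟨hxy, le_refl y⟩
  have hxIcc : x ∈ Icc x y := mem_Icc.2 ⟨le_refl x, hxy⟩
  have h1 : B (E R x x * f * E R y y) g = f x y • B (E R x y) g := by
    rw [sandwich, hB.hsmul_l]
  rw [hB.hder_l, hB.hder_l] at h1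
  have h2 := app2 h1 x y
  rw [IncidenceAlgebra.add_apply, mulE, if_pos ⟨rfl, hyIcc⟩, IncidenceAlgebra.add_apply,
    Emul, if_pos ⟨rfl, hxIcc⟩, IncidenceAlgebra.constSMul_apply, smul_eq_mul,
    IncidenceAlgebra.mul_apply, IncidenceAlgebra.mul_apply] at h2
  have hsum : ∑ z ∈ Icc x y, (E R x x * f) x z * B (E R y y) g z y
      = ∑ z ∈ Icc x y, f x z * B (E R y y) g z y := by
    refine Finset.sum_congr rfl fun z hz => ?_
    rw [Emul, if_pos ⟨rfl, mem_Icc.2 ⟨le_refl x, (mem_Icc.1 hz).1⟩⟩]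
  rw [hsum] at h2
  linear_combination h2

lemma expandR (hB : IsBider B) (f g : IncidenceAlgebra R P) (x y : P) (hxy : x ≤ y) :
    B f g x y = g x y * B f (E R x y) x y
      - (∑ z ∈ Icc x y, B f (E R x x) x z * g z y)
      - ∑ z ∈ Icc x y, g x z * B f (E R y y) z y := by
  have hyIcc : y ∈ Icc x y := mem_Icc.2 ⟨hxy, le_refl y⟩
  have hxIcc : x ∈ Icc x y := mem_Icc.2 ⟨le_refl x, hxy⟩
  have h1 : B f (E R x x * g * E R y y) = g x y • B f (E R x y) := by
    rw [sandwich, hB.hsmul_r]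
  rw [hB.hder_r, hB.hder_r] at h1
  have h2 := app2 h1 x y
  rw [IncidenceAlgebra.add_apply, mulE, if_pos ⟨rfl, hyIcc⟩, IncidenceAlgebra.add_apply,
    Emul, if_pos ⟨rfl, hxIcc⟩, IncidenceAlgebra.constSMul_apply, smul_eq_mul,
    IncidenceAlgebra.mul_apply, IncidenceAlgebra.mul_apply] at h2
  have hsum : ∑ z ∈ Icc x y, (E R x x * g) x z * B f (E R y y) z y
      = ∑ z ∈ Icc x y, g x z * B f (E R y y) z y := by
    refine Finset.sum_congr rfl fun z hz => ?_
    rw [Emul, if_pos ⟨rfl, mem_Icc.2 ⟨le_refl x, (mem_Icc.1 hz).1⟩⟩]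
  rw [hsum] at h2
  linear_combination h2

lemma diag (hB : IsBider B) (f g : IncidenceAlgebra R P) (x : P) : B f g x x = 0 := by
  have h := expandL hB f g x x (le_refl x)
  rw [Icc_self, Finset.sum_singleton, Finset.sum_singleton, diagE hB g x] at h
  simpa using h

lemma tau (hB : IsBider B) {x y : P} (hxy : x < y) : B (E R x x) (E R y y) x y = 0 := by
  have h := expandR hB (E R x x) (E R y y) x y hxy.le
  have s1 : ∑ z ∈ Icc x y, B (E R x x) (E R x x) x z * E R y y z y = 0 :=
    Finset.sum_eq_zero fun z _ => by
      rw [hB.hanti, IncidenceAlgebra.zero_apply, zero_mul]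
  have s2 : ∑ z ∈ Icc x y, E R y y x z * B (E R x x) (E R y y) z y = 0 :=
    Finset.sum_eq_zero fun z _ => by rw [E_ne_left hxy.ne, zero_mul]
  rw [s1, s2, E_ne_left hxy.ne, zero_mul, sub_zero, sub_zero] at h
  exact h

lemma phi (hB : IsBider B) {x y : P} (hxy : x < y) (g : IncidenceAlgebra R P) :
    B (E R x x) g x y = sig B x y * g x y := by
  have h := expandR hB (E R x x) g x y hxy.le
  have s1 : ∑ z ∈ Icc x y, B (E R x x) (E R x x) x z * g z y = 0 :=
    Finset.sum_eq_zero fun z _ => by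
      rw [hB.hanti, IncidenceAlgebra.zero_apply, zero_mul]
  have s2 : ∑ z ∈ Icc x y, g x z * B (E R x x) (E R y y) z y = 0 := by
    refine Finset.sum_eq_zero fun z hz => ?_
    rcases eq_or_lt_of_le (mem_Icc.1 hz).2 with rfl | hzy
    · rw [diag hB, mul_zero]
    · rcases Classical.em (z = x) with rfl | hzx
      · rw [tau hB hxy, mul_zero]
      · rw [rowcol_l hB _ x z y hzx hxy.ne', mul_zero]
  rw [s1, s2, sub_zero, sub_zero] at h
  rw [h, mul_comm]
  rfl

lemma psiY (hB : IsBider B) {z y : P} (hzy : z < y) (g : IncidenceAlgebra R P) :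
    B (E R y y) g z y = -(sig B z y * g z y) := by
  have h := expandL hB (E R y y) g z y hzy.le
  have s2 : ∑ w ∈ Icc z y, E R y y z w * B (E R y y) g w y = 0 :=
    Finset.sum_eq_zero fun w _ => by rw [E_ne_left hzy.ne, zero_mul]
  have s1 : ∑ w ∈ Icc z y, B (E R z z) g z w * E R y y w y = B (E R z z) g z y := by
    rw [Finset.sum_eq_single y]
    · rw [E_same (le_refl y), mul_one]
    · intro w _ hwy; rw [E_ne_left hwy, mul_zero]
    · intro hy; exact absurd (mem_Icc.2 ⟨hzy.le, le_refl y⟩) hy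
  rw [s1, s2, E_ne_left hzy.ne, zero_mul, zero_sub, sub_zero] at h
  rw [h, phi hB hzy g]

lemma cval (hB : IsBider B) {x y : P} (hxy : x < y) (g : IncidenceAlgebra R P) :
    B (E R x y) g x y = sig B x y * (g y y - g x x) := by
  have h := expandR hB (E R x y) g x y hxy.le
  have s0 : B (E R x y) (E R x y) x y = 0 := by rw [hB.hanti]; rfl
  have hsig : B (E R x x) (E R x y) x y = sig B x y := rfl
  have s1 : ∑ z ∈ Icc x y, B (E R x y) (E R x x) x z * g z y = -(sig B x y * g y y) := by
    rw [Finset.sum_eq_single y]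
    · rw [skew hB (E R x y) (E R x x), IncidenceAlgebra.neg_apply, hsig, neg_mul]
    · intro z hz hzy
      rcases Classical.em (z = x) with heq | hzx
      · rw [heq, skew hB (E R x y) (E R x x), IncidenceAlgebra.neg_apply, diag hB, neg_zero,
          zero_mul]
      · have hxz : x < z := lt_of_le_of_ne (mem_Icc.1 hz).1 (Ne.symm hzx)
        rw [skew hB (E R x y) (E R x x), IncidenceAlgebra.neg_apply, phi hB hxz (E R x y),
          E_ne_right hzy, mul_zero, neg_zero, zero_mul]
    · intro hy; exact absurd (mem_Icc.2 ⟨hxy.le, le_refl y⟩) hy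
  have s2 : ∑ z ∈ Icc x y, g x z * B (E R x y) (E R y y) z y = g x x * sig B x y := by
    rw [Finset.sum_eq_single x]
    · rw [skew hB (E R x y) (E R y y), IncidenceAlgebra.neg_apply, psiY hB hxy (E R x y),
        E_same hxy.le, mul_one, neg_neg]
    · intro z hz hzx
      rcases eq_or_lt_of_le (mem_Icc.1 hz).2 with rfl | hzy
      · rw [diag hB, mul_zero]
      · rw [skew hB (E R x y) (E R y y), IncidenceAlgebra.neg_apply, psiY hB hzy (E R x y),
          E_ne_left hzx, mul_zero, neg_zero, neg_zero, mul_zero]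
    · intro hx; exact absurd (mem_Icc.2 ⟨le_refl x, hxy.le⟩) hx
  rw [s0, mul_zero, s1, s2] at h
  rw [h]; ring

lemma chain1 (hB : IsBider B) {x z y : P} (hxz : x < z) (hzy : z < y) :
    sig B x z = sig B z y := by
  have hxy : x ≤ y := (hxz.trans hzy).le
  have hA := expandL hB (E R x z) (E R z y) x y hxy
  have hBx := expandR hB (E R x z) (E R z y) x y hxy
  have sA1 : ∑ w ∈ Icc x y, B (E R x x) (E R z y) x w * E R x z w y = 0 :=
    Finset.sum_eq_zero fun w _ => by rw [E_ne_right hzy.ne', mul_zero]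
  have sA2 : ∑ w ∈ Icc x y, E R x z x w * B (E R y y) (E R z y) w y = -(sig B z y) := by
    rw [Finset.sum_eq_single z]
    · rw [E_same hxz.le, one_mul, psiY hB hzy (E R z y), E_same hzy.le, mul_one]
    · intro w _ hwz; rw [E_ne_right hwz, zero_mul]
    · intro hz; exact absurd (mem_Icc.2 ⟨hxz.le, hzy.le⟩) hz
  rw [sA1, sA2, E_ne_right hzy.ne', zero_mul] at hA
  have sB2 : ∑ w ∈ Icc x y, E R z y x w * B (E R x z) (E R y y) w y = 0 :=
    Finset.sum_eq_zero fun w _ => by rw [E_ne_left hxz.ne, zero_mul]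
  have sB1 : ∑ w ∈ Icc x y, B (E R x z) (E R x x) x w * E R z y w y = -(sig B x z) := by
    rw [Finset.sum_eq_single z]
    · rw [skew hB (E R x z) (E R x x), IncidenceAlgebra.neg_apply, phi hB hxz (E R x z),
        E_same hxz.le, E_same hzy.le, mul_one, mul_one]
    · intro w _ hwz; rw [E_ne_left hwz, mul_zero]
    · intro hz; exact absurd (mem_Icc.2 ⟨hxz.le, hzy.le⟩) hz
  rw [sB1, sB2, E_ne_left hxz.ne, zero_mul] at hBx
  have := hA.symm.trans hBx
  linear_combination -this

lemma chain2 (hB : IsBider B) {x z y : P} (hxz : x < z) (hzy : z < y) :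
    sig B x y = sig B z y := by
  have hxy : x < y := hxz.trans hzy
  have h := hB.hder_l (E R x z) (E R z y) (E R y y)
  rw [E_mul_E hxz.le hzy.le] at h
  have h2 := app2 h x y
  rw [IncidenceAlgebra.add_apply, mulE, Emul,
    if_pos ⟨rfl, mem_Icc.2 ⟨hxz.le, hzy.le⟩⟩, if_pos ⟨rfl, mem_Icc.2 ⟨hxz.le, hzy.le⟩⟩,
    rowcol_r hB (E R x z) y x z hxy.ne hzy.ne, zero_add,
    cval hB hxy (E R y y), cval hB hzy (E R y y),
    E_same (le_refl y), E_ne_left hxy.ne, E_ne_left hzy.ne] at h2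
  linear_combination h2

lemma main_formula (hB : IsBider B) (f g : IncidenceAlgebra R P) {x y : P} (hxy : x < y) :
    B f g x y = sig B x y * ((f * g) x y - (g * f) x y) := by
  have hyIcc : y ∈ Icc x y := mem_Icc.2 ⟨hxy.le, le_refl y⟩
  have hxIcc : x ∈ Icc x y := mem_Icc.2 ⟨le_refl x, hxy.le⟩
  have h := expandL hB f g x y hxy.le
  have hs1 : ∑ z ∈ Icc x y, B (E R x x) g x z * f z y
      = ∑ z ∈ Icc x y, (sig B x y * (g x z * f z y)
          - if z = x then sig B x y * (g x z * f z y) else 0) := by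
    refine Finset.sum_congr rfl fun z hz => ?_
    rcases Classical.em (z = x) with rfl | hzx
    · rw [if_pos rfl, diagE hB, zero_mul, sub_self]
    · have hxz : x < z := lt_of_le_of_ne (mem_Icc.1 hz).1 (Ne.symm hzx)
      rw [if_neg hzx, sub_zero, phi hB hxz g]
      have hss : sig B x z = sig B x y := by
        rcases eq_or_lt_of_le (mem_Icc.1 hz).2 with rfl | hzy
        · rfl
        · exact (chain1 hB hxz hzy).trans (chain2 hB hxz hzy).symm
      rw [hss]; ring
  have hs2 : ∑ z ∈ Icc x y, f x z * B (E R y y) g z y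
      = ∑ z ∈ Icc x y, (-(sig B x y * (f x z * g z y))
          + if z = y then sig B x y * (f x z * g z y) else 0) := by
    refine Finset.sum_congr rfl fun z hz => ?_
    rcases Classical.em (z = y) with rfl | hzy
    · rw [if_pos rfl, diag hB, mul_zero]; ring
    · have hzy' : z < y := lt_of_le_of_ne (mem_Icc.1 hz).2 hzy
      rw [if_neg hzy, add_zero, psiY hB hzy' g]
      have hss : sig B z y = sig B x y := by
        rcases eq_or_lt_of_le (mem_Icc.1 hz).1 with rfl | hxz
        · rfl
        · exact (chain2 hB hxz hzy').symm
      rw [hss]; ring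
  rw [hs1, hs2, Finset.sum_sub_distrib, Finset.sum_add_distrib,
    Finset.sum_ite_eq' (Icc x y) x, Finset.sum_ite_eq' (Icc x y) y,
    if_pos hxIcc, if_pos hyIcc, cval hB hxy g, Finset.sum_neg_distrib,
    ← Finset.mul_sum, ← Finset.mul_sum] at h
  rw [IncidenceAlgebra.mul_apply, IncidenceAlgebra.mul_apply, h]
  ring

lemma chain_step {s : P → P → R}
    (key : ∀ a b c : P, a < b → b < c → s a b = s a c ∧ s b c = s a c)
    {a b c d : P} (hab : a < b) (hcd : c < d) (hac : a ≤ c)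
    (hbc : b ≤ c ∨ c ≤ b) (hbd : b ≤ d ∨ d ≤ b) : s a b = s c d := by
  rcases hbc with hbc | hcb
  · rcases eq_or_lt_of_le hbc with rfl | hbc'
    · obtain ⟨h1, h2⟩ := key a b d hab hcd
      exact h1.trans h2.symm
    · obtain ⟨h1, h2⟩ := key a b c hab hbc'
      obtain ⟨h3, h4⟩ := key b c d hbc' hcd
      rw [h1, ← h2, h3, ← h4]
  · rcases eq_or_lt_of_le hcb with hceqb | hcb'
    · subst hceqb
      obtain ⟨h1, h2⟩ := key a c d hab hcd
      exact h1.trans h2.symm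
    rcases eq_or_lt_of_le hac with rfl | hac'
    · rcases hbd with hbd | hdb
      · rcases eq_or_lt_of_le hbd with rfl | hbd'
        · rfl
        · exact (key a b d hab hbd').1
      · rcases eq_or_lt_of_le hdb with rfl | hdb'
        · rfl
        · exact (key a d b hcd hdb').1.symm
    · obtain ⟨h1, h2⟩ := key a c b hac' hcb'
      rcases hbd with hbd | hdb
      · rcases eq_or_lt_of_le hbd with rfl | hbd'
        · exact h2.symm
        · obtain ⟨h3, h4⟩ := key c b d hcb' hbd'
          rw [← h2, h3, ← h4]
      · rcases eq_or_lt_of_le hdb with rfl | hdb'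
        · exact h2.symm
        · obtain ⟨h3, h4⟩ := key c d b hcd hdb'
          rw [← h2, h3]

end BiderAux

/-- Every `R`-bilinear antisymmetric biderivation `B` of `I(P,R)` is given by
a map `σ : P²_< → R` constant on chains via `B(f,g)(x,x) = 0` and
`B(f,g)(x,y) = σ(x,y)[f,g](x,y)` for `x < y`. -/
theorem antisymm_bider_eq_sigma_commutator
    {R P : Type*} [CommRing R] [PartialOrder P] [LocallyFiniteOrder P] [DecidableEq P]
    (B : IncidenceAlgebra R P → IncidenceAlgebra R P → IncidenceAlgebra R P)
    (hadd_l : ∀ f g h, B (f + g) h = B f h + B g h)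
    (hadd_r : ∀ f g h, B f (g + h) = B f g + B f h)
    (hsmul_l : ∀ (r : R) (f g), B (r • f) g = r • B f g)
    (hsmul_r : ∀ (r : R) (f g), B f (r • g) = r • B f g)
    (hder_l : ∀ f g h, B (f * g) h = B f h * g + f * B g h)
    (hder_r : ∀ f g h, B f (g * h) = B f g * h + g * B f h)
    (hanti : ∀ f, B f f = 0)
    :
    ∃ σ : P → P → R,
      (∀ x y u v : P, x < y → u < v → IsChain (· ≤ ·) ({x, y, u, v} : Set P) →
        σ x y = σ u v) ∧
      ∀ f g : IncidenceAlgebra R P,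
        (∀ x : P, B f g x x = 0) ∧
        (∀ x y : P, x < y → B f g x y = σ x y * (f * g - g * f) x y) := by
  have hB : BiderAux.IsBider B := ⟨hadd_l, hadd_r, hsmul_l, hsmul_r, hder_l, hder_r, hanti⟩
  have key : ∀ a b c : P, a < b → b < c →
      BiderAux.sig B a b = BiderAux.sig B a c ∧ BiderAux.sig B b c = BiderAux.sig B a c :=
    fun a b c hab hbc =>
      ⟨(BiderAux.chain1 hB hab hbc).trans (BiderAux.chain2 hB hab hbc).symm,
        (BiderAux.chain2 hB hab hbc).symm⟩
  refine ⟨BiderAux.sig B, ?_, ?_⟩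
  · intro x y u v hxy huv hch
    have hmx : x ∈ ({x, y, u, v} : Set P) := by simp
    have hmy : y ∈ ({x, y, u, v} : Set P) := by simp
    have hmu : u ∈ ({x, y, u, v} : Set P) := by simp
    have hmv : v ∈ ({x, y, u, v} : Set P) := by simp
    rcases hch.total hmx hmu with h | h
    · exact BiderAux.chain_step key hxy huv h (hch.total hmy hmu) (hch.total hmy hmv)
    · exact (BiderAux.chain_step key huv hxy h (hch.total hmv hmx) (hch.total hmv hmy)).symm
  · intro f g
    refine ⟨fun x => BiderAux.diag hB f g x, fun x y hxy => ?_⟩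
    rw [BiderAux.main_formula hB f g hxy, IncidenceAlgebra.sub_apply]
end

section
/- Let σ be a map assigning to each pair x < y in P an element σ(x,y) ∈ R which is constant on chains. Then the map B : I(P,R) × I(P,R) → I(P,R) defined by B(f,g)(x,x) = 0 for all x ∈ P and B(f,g)(x,y) = σ(x,y)·[f,g](x,y) for all x < y is an R-bilinear antisymmetric biderivation of I(P,R). -/
/-!
`B f g = weightBy σ (f * g - g * f)`, where `weightBy σ` multiplies entrywise by `σ`, so
bilinearity and antisymmetry come from the commutator. For the Leibniz rules: a commutator `u`
vanishes on the diagonal, so `(u * g) x y` only involves terms `u x z * g z y` with `x < z ≤ y`,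
and there `σ x y = σ x z` because `x < z ≤ y` is a chain. Hence weighting commutes with
multiplication by such `u`, and the Leibniz rules of the commutator carry over to `B`.
-/

open IncidenceAlgebra

lemma isChain_triple_of_le_of_le {P : Type*} [Preorder P] {a b c : P} (hab : a ≤ b) (hbc : b ≤ c) :
    IsChain (· ≤ ·) ({a, b, c} : Set P) :=
  (IsChain.pair hbc).insert fun d hd _ => Or.inl <| by
    rcases hd with rfl | rfl
    exacts [hab, hab.trans hbc]

def IsConstOnChains {P R : Type*} [Preorder P] (σ : P → P → R) : Prop :=
  ∀ x y u v : P, x < y → u < v → IsChain (· ≤ ·) ({x, y, u, v} : Set P) → σ x y = σ u v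

namespace IsConstOnChains

variable {P R : Type*} [Preorder P] {σ : P → P → R} {x y z : P}

lemma apply_eq_of_lt_of_le (hσ : IsConstOnChains σ) (hxz : x < z) (hzy : z ≤ y) :
    σ x z = σ x y :=
  hσ x z x y hxz (hxz.trans_le hzy) <| (isChain_triple_of_le_of_le hxz.le hzy).mono <| by
    simp [Set.insert_subset_iff]

lemma apply_eq_of_le_of_lt (hσ : IsConstOnChains σ) (hxz : x ≤ z) (hzy : z < y) :
    σ z y = σ x y :=
  hσ z y x y hzy (hxz.trans_lt hzy) <| (isChain_triple_of_le_of_le hxz hzy.le).mono <| by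
    simp [Set.insert_subset_iff]

end IsConstOnChains

namespace IncidenceAlgebra

variable {R P : Type*}

section Preorder

variable [CommSemiring R] [Preorder P]

def weightBy (σ : P → P → R) : IncidenceAlgebra R P →ₗ[R] IncidenceAlgebra R P where
  toFun f := ⟨fun x y => σ x y * f x y, fun x y h => by rw [apply_eq_zero_of_not_le h, mul_zero]⟩
  map_add' f g := by ext; simp [mul_add]
  map_smul' r f := by ext; simp [mul_left_comm]

@[simp] lemma weightBy_apply (σ : P → P → R) (f : IncidenceAlgebra R P) (x y : P) :
    weightBy σ f x y = σ x y * f x y := rfl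

end Preorder

section PartialOrder

variable [CommSemiring R] [PartialOrder P] [LocallyFiniteOrder P] {σ : P → P → R}

lemma weightBy_mul_of_left_diag_eq_zero (hσ : IsConstOnChains σ) {u : IncidenceAlgebra R P}
    (hu : ∀ x, u x x = 0) (g : IncidenceAlgebra R P) :
    weightBy σ (u * g) = weightBy σ u * g := by
  ext x y _
  simp only [weightBy_apply, mul_apply, Finset.mul_sum]
  refine Finset.sum_congr rfl fun z hz => ?_
  obtain ⟨hxz, hzy⟩ := Finset.mem_Icc.mp hz
  rcases hxz.lt_or_eq with hxz | rfl
  · rw [hσ.apply_eq_of_lt_of_le hxz hzy, mul_assoc]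
  · simp [hu]

lemma weightBy_mul_of_right_diag_eq_zero (hσ : IsConstOnChains σ) {u : IncidenceAlgebra R P}
    (hu : ∀ x, u x x = 0) (g : IncidenceAlgebra R P) :
    weightBy σ (g * u) = g * weightBy σ u := by
  ext x y _
  simp only [weightBy_apply, mul_apply, Finset.mul_sum]
  refine Finset.sum_congr rfl fun z hz => ?_
  obtain ⟨hxz, hzy⟩ := Finset.mem_Icc.mp hz
  rcases hzy.lt_or_eq with hzy | rfl
  · rw [← hσ.apply_eq_of_le_of_lt hxz hzy, mul_left_comm]
  · simp [hu]

end PartialOrder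

lemma commutator_apply_self [CommRing R] [PartialOrder P]
    [LocallyFiniteOrder P] [DecidableEq P] (f g : IncidenceAlgebra R P) (x : P) :
    (f * g - g * f) x x = 0 := by
  simp [sub_apply, mul_comm]

end IncidenceAlgebra

/-- If `σ : P²_< → R` is constant on chains, then the map `B` defined by
`B(f,g)(x,x) = 0` and `B(f,g)(x,y) = σ(x,y)[f,g](x,y)` for `x < y` is an `R`-bilinear
antisymmetric biderivation of `I(P,R)`. -/
theorem sigma_commutator_is_antisymm_bider
    {R P : Type*} [CommRing R] [PartialOrder P] [LocallyFiniteOrder P] [DecidableEq P]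
    (σ : P → P → R)
    (hσ : ∀ x y u v : P, x < y → u < v → IsChain (· ≤ ·) ({x, y, u, v} : Set P) →
      σ x y = σ u v)
    (B : IncidenceAlgebra R P → IncidenceAlgebra R P → IncidenceAlgebra R P)
    (hB_diag : ∀ (f g : IncidenceAlgebra R P) (x : P), B f g x x = 0)
    (hB_lt : ∀ (f g : IncidenceAlgebra R P) (x y : P), x < y →
      B f g x y = σ x y * (f * g - g * f) x y) :
    (∀ f g h, B (f + g) h = B f h + B g h) ∧
    (∀ f g h, B f (g + h) = B f g + B f h) ∧
    (∀ (r : R) (f g), B (r • f) g = r • B f g) ∧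
    (∀ (r : R) (f g), B f (r • g) = r • B f g) ∧
    (∀ f g h, B (f * g) h = B f h * g + f * B g h) ∧
    (∀ f g h, B f (g * h) = B f g * h + g * B f h) ∧
    (∀ f, B f f = 0) := by
  have hB : ∀ f g, B f g = weightBy σ (f * g - g * f) := by
    intro f g
    ext x y hxy
    rcases hxy.lt_or_eq with hxy | rfl
    · rw [hB_lt f g x y hxy, weightBy_apply]
    · rw [hB_diag, weightBy_apply, commutator_apply_self, mul_zero]
  simp only [hB]
  refine ⟨fun f g h => ?_, fun f g h => ?_, fun r f g => ?_, fun r f g => ?_, fun f g h => ?_,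
    fun f g h => ?_, fun f => ?_⟩
  · rw [← map_add]; congr 1; noncomm_ring
  · rw [← map_add]; congr 1; noncomm_ring
  · rw [← map_smul, smul_sub, smul_mul_assoc, mul_smul_comm]
  · rw [← map_smul, smul_sub, smul_mul_assoc, mul_smul_comm]
  · rw [show f * g * h - h * (f * g) = (f * h - h * f) * g + f * (g * h - h * g) by noncomm_ring,
      map_add, weightBy_mul_of_left_diag_eq_zero hσ (commutator_apply_self f h),
      weightBy_mul_of_right_diag_eq_zero hσ (commutator_apply_self g h)]
  · rw [show f * (g * h) - g * h * f = (f * g - g * f) * h + g * (f * h - h * f) by noncomm_ring,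
      map_add, weightBy_mul_of_left_diag_eq_zero hσ (commutator_apply_self f g),
      weightBy_mul_of_right_diag_eq_zero hσ (commutator_apply_self f h)]
  · rw [sub_self, map_zero]
end

section
/- Let B be an R-bilinear antisymmetric biderivation of I(P,R). Then B satisfies the Jacobi identity: for all f, g, h ∈ I(P,R), B(f, B(g,h)) + B(g, B(h,f)) + B(h, B(f,g)) = 0. -/
open Finset

namespace AntisymmBiderAux

variable {R P : Type*} [CommRing R] [PartialOrder P] [LocallyFiniteOrder P] [DecidableEq P]

open scoped Classical in
/-- Elementary "matrix unit" element of the incidence algebra. -/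
noncomputable def Ee (a b : P) : IncidenceAlgebra R P :=
  ⟨fun u v => if u = a ∧ v = b ∧ a ≤ b then 1 else 0, by
    intro u v huv
    rw [if_neg]
    rintro ⟨rfl, rfl, hab⟩
    exact huv hab⟩

open scoped Classical in
lemma Ee_apply (a b u v : P) :
    (Ee a b : IncidenceAlgebra R P) u v = if u = a ∧ v = b ∧ a ≤ b then 1 else 0 := rfl

lemma Ee_self (a b : P) (hab : a ≤ b) : (Ee a b : IncidenceAlgebra R P) a b = 1 := by
  rw [Ee_apply, if_pos ⟨rfl, rfl, hab⟩]

lemma Ee_zero_of_not_le {a b : P} (h : ¬ a ≤ b) : (Ee a b : IncidenceAlgebra R P) = 0 := by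
  ext u v _
  rw [Ee_apply, IncidenceAlgebra.zero_apply, if_neg]
  rintro ⟨-, -, hab⟩
  exact h hab

lemma Ee_mul_apply {a b : P} (hab : a ≤ b) (f : IncidenceAlgebra R P) (u v : P) :
    ((Ee a b : IncidenceAlgebra R P) * f) u v = if u = a then f b v else 0 := by
  rw [IncidenceAlgebra.mul_apply]
  by_cases hu : u = a
  · rw [if_pos hu]
    have hcongr : ∀ z ∈ Icc u v, (Ee a b : IncidenceAlgebra R P) u z * f z v
        = if z = b then f z v else 0 := by
      intro z hz
      rw [Ee_apply]
      by_cases hzb : z = b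
      · rw [if_pos ⟨hu, hzb, hab⟩, if_pos hzb, hzb, one_mul]
      · rw [if_neg (by rintro ⟨-, h1, -⟩; exact hzb h1), if_neg hzb, zero_mul]
    rw [Finset.sum_congr rfl hcongr, Finset.sum_ite_eq' (Icc u v) b fun z => f z v]
    by_cases hbv : b ∈ Icc u v
    · rw [if_pos hbv]
    · rw [if_neg hbv]
      symm
      apply IncidenceAlgebra.apply_eq_zero_of_not_le
      intro hb
      exact hbv (mem_Icc.mpr ⟨hu ▸ hab, hb⟩)
  · rw [if_neg hu]
    refine Finset.sum_eq_zero fun z hz => ?_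
    rw [Ee_apply, if_neg (by rintro ⟨h1, -⟩; exact hu h1), zero_mul]

lemma mul_Ee_apply {a b : P} (hab : a ≤ b) (f : IncidenceAlgebra R P) (u v : P) :
    (f * (Ee a b : IncidenceAlgebra R P)) u v = if v = b then f u a else 0 := by
  rw [IncidenceAlgebra.mul_apply]
  by_cases hv : v = b
  · rw [if_pos hv]
    have hcongr : ∀ z ∈ Icc u v, f u z * (Ee a b : IncidenceAlgebra R P) z v
        = if z = a then f u z else 0 := by
      intro z hz
      rw [Ee_apply]
      by_cases hza : z = a
      · rw [if_pos ⟨hza, hv, hab⟩, if_pos hza, hza, mul_one]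
      · rw [if_neg (by rintro ⟨h1, -⟩; exact hza h1), if_neg hza, mul_zero]
    rw [Finset.sum_congr rfl hcongr, Finset.sum_ite_eq' (Icc u v) a fun z => f u z]
    by_cases hav : a ∈ Icc u v
    · rw [if_pos hav]
    · rw [if_neg hav]
      symm
      apply IncidenceAlgebra.apply_eq_zero_of_not_le
      intro ha
      exact hav (mem_Icc.mpr ⟨ha, hv ▸ hab⟩)
  · rw [if_neg hv]
    refine Finset.sum_eq_zero fun z hz => ?_
    rw [Ee_apply, if_neg (by rintro ⟨-, h1, -⟩; exact hv h1), mul_zero]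

lemma smulEe_mul_apply {a b : P} (hab : a ≤ b) (r : R) (f : IncidenceAlgebra R P) (u v : P) :
    (((r:R) • (Ee a b : IncidenceAlgebra R P)) * f) u v = if u = a then r * f b v else 0 := by
  rw [IncidenceAlgebra.mul_apply]
  have hcongr : ∀ z ∈ Icc u v, ((r • Ee a b : IncidenceAlgebra R P)) u z * f z v
      = r * ((Ee a b : IncidenceAlgebra R P) u z * f z v) := by
    intro z hz
    rw [IncidenceAlgebra.constSMul_apply, smul_eq_mul, mul_assoc]
  rw [Finset.sum_congr rfl hcongr, ← Finset.mul_sum, ← IncidenceAlgebra.mul_apply,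
    Ee_mul_apply hab]
  by_cases hu : u = a
  · rw [if_pos hu, if_pos hu]
  · rw [if_neg hu, if_neg hu, mul_zero]

lemma mul_smulEe_apply {a b : P} (hab : a ≤ b) (r : R) (f : IncidenceAlgebra R P) (u v : P) :
    (f * ((r:R) • (Ee a b : IncidenceAlgebra R P))) u v = if v = b then r * f u a else 0 := by
  rw [IncidenceAlgebra.mul_apply]
  have hcongr : ∀ z ∈ Icc u v, f u z * ((r • Ee a b : IncidenceAlgebra R P)) z v
      = r * (f u z * (Ee a b : IncidenceAlgebra R P) z v) := by
    intro z hz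
    rw [IncidenceAlgebra.constSMul_apply, smul_eq_mul]
    ring
  rw [Finset.sum_congr rfl hcongr, ← Finset.mul_sum, ← IncidenceAlgebra.mul_apply,
    mul_Ee_apply hab]
  by_cases hv : v = b
  · rw [if_pos hv, if_pos hv]
  · rw [if_neg hv, if_neg hv, mul_zero]

lemma Ee_mul_Ee {x z y : P} (hxz : x ≤ z) (hzy : z ≤ y) :
    (Ee x z : IncidenceAlgebra R P) * Ee z y = Ee x y := by
  ext u v _
  rw [Ee_mul_apply hxz, Ee_apply, Ee_apply]
  by_cases hu : u = x
  · rw [if_pos hu]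
    by_cases hv : v = y
    · rw [if_pos ⟨rfl, hv, hzy⟩, if_pos ⟨hu, hv, le_trans hxz hzy⟩]
    · rw [if_neg (by rintro ⟨-, h1, -⟩; exact hv h1), if_neg (by rintro ⟨-, h1, -⟩; exact hv h1)]
  · rw [if_neg hu, if_neg (by rintro ⟨h1, -⟩; exact hu h1)]

lemma Ee_diag_mul_diag {a c : P} (hac : a ≠ c) :
    (Ee a a : IncidenceAlgebra R P) * Ee c c = 0 := by
  ext u v _
  rw [Ee_mul_apply le_rfl, IncidenceAlgebra.zero_apply]
  by_cases hu : u = a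
  · rw [if_pos hu, Ee_apply, if_neg (by rintro ⟨h1, -⟩; exact hac h1)]
  · rw [if_neg hu]

lemma sandwich {x y : P} (hxy : x ≤ y) (f : IncidenceAlgebra R P) :
    (Ee x x : IncidenceAlgebra R P) * f * Ee y y = f x y • Ee x y := by
  ext u v _
  rw [mul_Ee_apply le_rfl, IncidenceAlgebra.constSMul_apply, smul_eq_mul, Ee_apply]
  by_cases hv : v = y
  · rw [if_pos hv, Ee_mul_apply le_rfl]
    by_cases hu : u = x
    · rw [if_pos hu, if_pos ⟨hu, hv, hxy⟩, mul_one]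
    · rw [if_neg hu, if_neg (by rintro ⟨h1, -⟩; exact hu h1), mul_zero]
  · rw [if_neg hv, if_neg (by rintro ⟨-, h1, -⟩; exact hv h1), mul_zero]

lemma sandwich_apply (f : IncidenceAlgebra R P) (x y : P) :
    ((Ee x x * f * Ee y y : IncidenceAlgebra R P)) x y = f x y := by
  rw [mul_Ee_apply le_rfl, if_pos rfl, Ee_mul_apply le_rfl, if_pos rfl]

end AntisymmBiderAux

open Finset AntisymmBiderAux in
/-- Every `R`-bilinear antisymmetric biderivation of `I(P,R)` satisfies the
Jacobi identity. -/
theorem antisymm_bider_jacobi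
    {R P : Type*} [CommRing R] [PartialOrder P] [LocallyFiniteOrder P] [DecidableEq P]
    (B : IncidenceAlgebra R P → IncidenceAlgebra R P → IncidenceAlgebra R P)
    (hadd_l : ∀ f g h, B (f + g) h = B f h + B g h)
    (hadd_r : ∀ f g h, B f (g + h) = B f g + B f h)
    (hsmul_l : ∀ (r : R) (f g), B (r • f) g = r • B f g)
    (hsmul_r : ∀ (r : R) (f g), B f (r • g) = r • B f g)
    (hder_l : ∀ f g h, B (f * g) h = B f h * g + f * B g h)
    (hder_r : ∀ f g h, B f (g * h) = B f g * h + g * B f h)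
    (hanti : ∀ f, B f f = 0)
    :
    ∀ f g h : IncidenceAlgebra R P, B f (B g h) + B g (B h f) + B h (B f g) = 0 := by
  have ev : ∀ {p q : IncidenceAlgebra R P}, p = q → ∀ u v : P, p u v = q u v :=
    fun hpq u v => by rw [hpq]
  -- B is zero when one argument is zero
  have B0l : ∀ g, B 0 g = 0 := by
    intro g
    have h1 := hadd_l 0 0 g
    rw [add_zero] at h1
    exact (left_eq_add.mp h1)
  have B0r : ∀ f, B f 0 = 0 := by
    intro f
    have h1 := hadd_r f 0 0
    rw [add_zero] at h1
    exact (left_eq_add.mp h1)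
  -- antisymmetry
  have hskew : ∀ f g, B g f = - B f g := by
    intro f g
    have h1 := hanti (f + g)
    rw [hadd_l, hadd_r, hadd_r, hanti, hanti, zero_add, add_zero] at h1
    exact eq_neg_of_add_eq_zero_right h1
  -- the key scalar function
  let σ : P → P → R := fun u v => B (Ee u u) (Ee u v) u v
  -- support of B (Ee a a) g
  have key_diag : ∀ (a : P) g, B (Ee a a) g = B (Ee a a) g * Ee a a + Ee a a * B (Ee a a) g := by
    intro a g
    have h1 := hder_l (Ee a a) (Ee a a) g
    rw [Ee_mul_Ee le_rfl le_rfl] at h1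
    exact h1
  have S1 : ∀ (a : P) g u v, u ≠ a → v ≠ a → B (Ee a a) g u v = 0 := by
    intro a g u v hu hv
    have h1 := ev (key_diag a g) u v
    rw [IncidenceAlgebra.add_apply, mul_Ee_apply le_rfl, Ee_mul_apply le_rfl,
      if_neg hv, if_neg hu, add_zero] at h1
    exact h1
  have S1diag : ∀ (a : P) g, B (Ee a a) g a a = 0 := by
    intro a g
    have h1 := ev (key_diag a g) a a
    rw [IncidenceAlgebra.add_apply, mul_Ee_apply le_rfl, Ee_mul_apply le_rfl,
      if_pos rfl] at h1
    exact left_eq_add.mp h1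
  have S1r : ∀ (a : P) g u v, u ≠ a → v ≠ a → B g (Ee a a) u v = 0 := by
    intro a g u v hu hv
    rw [hskew (Ee a a) g, IncidenceAlgebra.neg_apply, S1 a g u v hu hv, neg_zero]
  -- B between diagonal idempotents vanishes
  have S2 : ∀ a c : P, B (Ee a a) (Ee c c) = 0 := by
    intro a c
    by_cases hac : a = c
    · rw [hac]; exact hanti _
    · have hac' : c ≠ a := fun h => hac h.symm
      have hAC : B (Ee a a) (Ee c c) a c = 0 := by
        have h1 := hder_l (Ee a a) (Ee c c) (Ee c c)
        rw [Ee_diag_mul_diag hac, B0l, hanti, mul_zero, add_zero] at h1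
        have h2 := ev h1.symm a c
        rw [mul_Ee_apply le_rfl, if_pos rfl, IncidenceAlgebra.zero_apply] at h2
        exact h2
      have hCA : B (Ee a a) (Ee c c) c a = 0 := by
        have h1 := hder_l (Ee c c) (Ee a a) (Ee a a)
        rw [Ee_diag_mul_diag hac', B0l, hanti, mul_zero, add_zero] at h1
        have h2 := ev h1.symm c a
        rw [mul_Ee_apply le_rfl, if_pos rfl, IncidenceAlgebra.zero_apply] at h2
        rw [hskew (Ee a a) (Ee c c), IncidenceAlgebra.neg_apply, neg_eq_zero] at h2
        exact h2
      ext u v _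
      rw [IncidenceAlgebra.zero_apply]
      by_cases hu : u = a
      · by_cases hv : v = c
        · rw [hu, hv]; exact hAC
        · have hu' : u ≠ c := by rw [hu]; exact hac
          exact S1r c _ u v hu' hv
      · by_cases hv : v = a
        · by_cases huc : u = c
          · rw [huc, hv]; exact hCA
          · have hv' : v ≠ c := by rw [hv]; exact hac
            exact S1r c _ u v huc hv'
        · exact S1 a _ u v hu hv
  -- B (Ee a a) (Ee c d) = 0 when a is not an endpoint
  have S3 : ∀ a c d : P, c ≤ d → a ≠ c → a ≠ d → B (Ee a a) (Ee c d) = 0 := by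
    intro a c d hcd hc hd
    have h1 : B (Ee a a) (Ee c d) = Ee c c * B (Ee a a) (Ee c d) := by
      have h2 := hder_r (Ee a a) (Ee c c) (Ee c d)
      rw [Ee_mul_Ee le_rfl hcd, S2, zero_mul, zero_add] at h2
      exact h2
    have h4 : B (Ee a a) (Ee c d) = B (Ee a a) (Ee c d) * Ee d d := by
      have h2 := hder_r (Ee a a) (Ee c d) (Ee d d)
      rw [Ee_mul_Ee hcd le_rfl, S2, mul_zero, add_zero] at h2
      exact h2
    ext u v _
    rw [IncidenceAlgebra.zero_apply]
    have h5 := ev h1 u v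
    rw [Ee_mul_apply le_rfl] at h5
    by_cases hu : u = c
    · rw [if_pos hu] at h5
      have h6 := ev h4 c v
      rw [mul_Ee_apply le_rfl] at h6
      by_cases hv : v = d
      · rw [if_pos hv] at h6
        rw [h5, h6]
        exact S1 a _ c d (fun h' => hc h'.symm) (fun h' => hd h'.symm)
      · rw [if_neg hv] at h6; rw [h5, h6]
    · rw [if_neg hu] at h5; exact h5
  -- B (Ee u u) (Ee u v)
  have S4 : ∀ u v : P, u ≤ v → B (Ee u u) (Ee u v) = σ u v • Ee u v := by
    intro u v huv
    have h1 : B (Ee u u) (Ee u v) = Ee u u * B (Ee u u) (Ee u v) := by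
      have h2 := hder_r (Ee u u) (Ee u u) (Ee u v)
      rw [Ee_mul_Ee le_rfl huv, hanti, zero_mul, zero_add] at h2
      exact h2
    have h4 : B (Ee u u) (Ee u v) = B (Ee u u) (Ee u v) * Ee v v := by
      have h2 := hder_r (Ee u u) (Ee u v) (Ee v v)
      rw [Ee_mul_Ee huv le_rfl, S2, mul_zero, add_zero] at h2
      exact h2
    ext w t _
    rw [IncidenceAlgebra.constSMul_apply, smul_eq_mul, Ee_apply]
    have h5 := ev h1 w t
    rw [Ee_mul_apply le_rfl] at h5
    by_cases hw : w = u
    · rw [if_pos hw] at h5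
      have h6 := ev h4 u t
      rw [mul_Ee_apply le_rfl] at h6
      by_cases ht : t = v
      · rw [if_pos ht] at h6
        rw [h5, h6, if_pos ⟨hw, ht, huv⟩, mul_one]
      · rw [if_neg ht] at h6
        rw [h5, h6, if_neg (by rintro ⟨-, h1', -⟩; exact ht h1'), mul_zero]
    · rw [if_neg hw] at h5
      rw [h5, if_neg (by rintro ⟨h1', -⟩; exact hw h1'), mul_zero]
  -- B (Ee v v) (Ee u v)
  have S5 : ∀ u v : P, u < v → B (Ee v v) (Ee u v) = (-(σ u v)) • Ee u v := by
    intro u v huv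
    have hle : u ≤ v := le_of_lt huv
    have hne : u ≠ v := ne_of_lt huv
    have h1 : B (Ee v v) (Ee u v) = Ee u u * B (Ee v v) (Ee u v) := by
      have h2 := hder_r (Ee v v) (Ee u u) (Ee u v)
      rw [Ee_mul_Ee le_rfl hle, S2, zero_mul, zero_add] at h2
      exact h2
    have h4 : B (Ee v v) (Ee u v) = B (Ee v v) (Ee u v) * Ee v v := by
      have h2 := hder_r (Ee v v) (Ee u v) (Ee v v)
      rw [Ee_mul_Ee hle le_rfl, hanti, mul_zero, add_zero] at h2
      exact h2
    have hval : B (Ee v v) (Ee u v) u v = -(σ u v) := by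
      have h2 := hder_r (Ee u v) (Ee u u) (Ee v v)
      rw [Ee_diag_mul_diag hne, B0r] at h2
      have h3 := ev h2.symm u v
      rw [IncidenceAlgebra.add_apply, mul_Ee_apply le_rfl, if_pos rfl,
        Ee_mul_apply le_rfl, if_pos rfl, IncidenceAlgebra.zero_apply] at h3
      rw [hskew (Ee u u) (Ee u v), hskew (Ee v v) (Ee u v), S4 u v hle] at h3
      rw [IncidenceAlgebra.neg_apply, IncidenceAlgebra.neg_apply,
        IncidenceAlgebra.constSMul_apply, smul_eq_mul, Ee_self u v hle, mul_one] at h3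
      linear_combination -h3
    ext w t _
    rw [IncidenceAlgebra.constSMul_apply, smul_eq_mul, Ee_apply]
    have h5 := ev h1 w t
    rw [Ee_mul_apply le_rfl] at h5
    by_cases hw : w = u
    · rw [if_pos hw] at h5
      have h6 := ev h4 u t
      rw [mul_Ee_apply le_rfl] at h6
      by_cases ht : t = v
      · rw [if_pos ht] at h6
        rw [h5, h6, hval, if_pos ⟨hw, ht, hle⟩, mul_one]
      · rw [if_neg ht] at h6
        rw [h5, h6, if_neg (by rintro ⟨-, h1', -⟩; exact ht h1'), mul_zero]
    · rw [if_neg hw] at h5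
      rw [h5, if_neg (by rintro ⟨h1', -⟩; exact hw h1'), mul_zero]
  -- combined basis formula
  have BdiagE : ∀ a u v : P, B (Ee a a) (Ee u v)
      = (((if u = a then (1:R) else 0) - if v = a then 1 else 0) * σ u v) • Ee u v := by
    intro a u v
    by_cases huv : u ≤ v
    · by_cases hau : a = u
      · by_cases huv2 : u = v
        · rw [if_pos hau.symm, if_pos ((hau.trans huv2).symm), sub_self, zero_mul, zero_smul,
            ← huv2, ← hau]
          exact hanti _
        · have hav : a ≤ v := hau.trans_le huv
          have hva : ¬ v = a := by
            intro h'
            exact huv2 (hau.symm.trans h'.symm)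
          rw [← hau, S4 a v hav, if_pos rfl, if_neg hva, sub_zero, one_mul]
      · by_cases hav : a = v
        · have hne : u ≠ v := fun h' => hau (hav.trans h'.symm)
          have hlt : u < v := lt_of_le_of_ne huv hne
          have hB : B (Ee a a) (Ee u v) = B (Ee v v) (Ee u v) := by rw [hav]
          rw [hB, S5 u v hlt, if_neg (fun h' => hau h'.symm), if_pos hav.symm,
            zero_sub, neg_one_mul]
        · rw [S3 a u v huv hau hav, if_neg (fun h' => hau h'.symm),
            if_neg (fun h' => hav h'.symm), sub_self, zero_mul, zero_smul]
    · rw [Ee_zero_of_not_le huv, B0r, smul_zero]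
  -- Master formula for diagonal first argument
  have MA : ∀ (a : P) g (u v : P), B (Ee a a) g u v
      = ((if u = a then (1:R) else 0) - if v = a then 1 else 0) * (σ u v * g u v) := by
    intro a g u v
    by_cases huv : u ≤ v
    · have e1 : B (Ee a a) (Ee u u * g * Ee v v) = Ee u u * B (Ee a a) g * Ee v v := by
        rw [hder_r (Ee a a) (Ee u u * g) (Ee v v), hder_r (Ee a a) (Ee u u) g, S2,
          zero_mul, zero_add, S2, mul_zero, add_zero]
      have e2 : B (Ee a a) (Ee u u * g * Ee v v) = g u v • B (Ee a a) (Ee u v) := by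
        rw [sandwich huv, hsmul_r]
      have h5 := ev (e1.symm.trans e2) u v
      rw [sandwich_apply, IncidenceAlgebra.constSMul_apply, smul_eq_mul] at h5
      have h6 := ev (BdiagE a u v) u v
      rw [IncidenceAlgebra.constSMul_apply, smul_eq_mul, Ee_self u v huv, mul_one] at h6
      rw [h6] at h5
      rw [h5]; ring
    · rw [IncidenceAlgebra.apply_eq_zero_of_not_le huv (B (Ee a a) g),
        IncidenceAlgebra.apply_eq_zero_of_not_le huv g, mul_zero, mul_zero]
  -- compatibility of σ along chains
  have compat1 : ∀ x z y : P, x < z → z < y → σ x z = σ x y := by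
    intro x z y hxz hzy
    have hxz' : x ≤ z := le_of_lt hxz
    have hzy' : z ≤ y := le_of_lt hzy
    have hxy' : x ≤ y := le_trans hxz' hzy'
    have h1 := hder_r (Ee x x) (Ee x z) (Ee z y)
    rw [Ee_mul_Ee hxz' hzy', S4 x y hxy', S4 x z hxz',
      S3 x z y hzy' (ne_of_lt hxz) (ne_of_lt (lt_trans hxz hzy)), mul_zero, add_zero] at h1
    have h2 := ev h1 x y
    rw [IncidenceAlgebra.constSMul_apply, smul_eq_mul, Ee_self x y hxy', mul_one,
      smulEe_mul_apply hxz', if_pos rfl, Ee_self z y hzy', mul_one] at h2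
    exact h2.symm
  have compat2 : ∀ x z y : P, x < z → z < y → σ z y = σ x y := by
    intro x z y hxz hzy
    have hxz' : x ≤ z := le_of_lt hxz
    have hzy' : z ≤ y := le_of_lt hzy
    have hxy' : x ≤ y := le_trans hxz' hzy'
    have h1 := hder_r (Ee z z) (Ee x z) (Ee z y)
    rw [Ee_mul_Ee hxz' hzy',
      S3 z x y hxy' (fun h' => (ne_of_lt hxz) h'.symm) (ne_of_lt hzy),
      S5 x z hxz, S4 z y hzy'] at h1
    have h2 := ev h1 x y
    rw [IncidenceAlgebra.zero_apply, IncidenceAlgebra.add_apply,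
      smulEe_mul_apply hxz', if_pos rfl, Ee_self z y hzy', mul_one,
      Ee_mul_apply hxz', if_pos rfl, IncidenceAlgebra.constSMul_apply, smul_eq_mul,
      Ee_self z y hzy', mul_one] at h2
    have h3 : σ z y = σ x z := by linear_combination -h2
    rw [h3, compat1 x z y hxz hzy]
  -- the (x,y) entry of B (Ee x y) g
  have Boff : ∀ (x y : P) g, x < y → B (Ee x y) g x y = σ x y * (g y y - g x x) := by
    intro x y g hxy
    have hle : x ≤ y := le_of_lt hxy
    have hBxx : B (Ee x y) (Ee x x) = -(σ x y • Ee x y) := by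
      rw [hskew (Ee x x) (Ee x y), S4 x y hle]
    have hByy : B (Ee x y) (Ee y y) = σ x y • Ee x y := by
      rw [hskew (Ee y y) (Ee x y), S5 x y hxy, neg_smul, neg_neg]
    have e1 : B (Ee x y) (Ee x x * g * Ee y y)
        = B (Ee x y) (Ee x x) * g * Ee y y + Ee x x * B (Ee x y) g * Ee y y
          + (Ee x x * g) * B (Ee x y) (Ee y y) := by
      rw [hder_r (Ee x y) (Ee x x * g) (Ee y y), hder_r (Ee x y) (Ee x x) g, add_mul]
    have e2 : B (Ee x y) (Ee x x * g * Ee y y) = 0 := by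
      rw [sandwich hle, hsmul_r, hanti, smul_zero]
    have e0 := e2.symm.trans e1
    rw [hBxx, hByy] at e0
    have h3 := ev e0 x y
    have t1 : ((-(σ x y • Ee x y)) * g * Ee y y : IncidenceAlgebra R P) x y
        = -(σ x y * g y y) := by
      rw [neg_mul, neg_mul, IncidenceAlgebra.neg_apply, mul_Ee_apply le_rfl, if_pos rfl,
        smulEe_mul_apply hle, if_pos rfl]
    have t3 : ((Ee x x * g) * (σ x y • Ee x y) : IncidenceAlgebra R P) x y
        = σ x y * g x x := by
      rw [mul_smulEe_apply hle, if_pos rfl, Ee_mul_apply le_rfl, if_pos rfl]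
    rw [IncidenceAlgebra.zero_apply, IncidenceAlgebra.add_apply, IncidenceAlgebra.add_apply,
      t1, sandwich_apply, t3] at h3
    linear_combination -h3
  -- Master formula: B is a σ-twisted commutator, pointwise
  have MC : ∀ f g (x y : P), B f g x y = σ x y * ((f * g) x y - (g * f) x y) := by
    intro f g x y
    by_cases hxy : x ≤ y
    · have e1 : B (Ee x x * f * Ee y y) g
          = B (Ee x x) g * f * Ee y y + Ee x x * B f g * Ee y y
            + (Ee x x * f) * B (Ee y y) g := by
        rw [hder_l (Ee x x * f) (Ee y y) g, hder_l (Ee x x) f g, add_mul]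
      have e2 : B (Ee x x * f * Ee y y) g = f x y • B (Ee x y) g := by
        rw [sandwich hxy, hsmul_l]
      have h3 := ev (e2.symm.trans e1) x y
      rw [IncidenceAlgebra.constSMul_apply, smul_eq_mul, IncidenceAlgebra.add_apply,
        IncidenceAlgebra.add_apply, sandwich_apply] at h3
      have hA1 : (B (Ee x x) g * f * Ee y y : IncidenceAlgebra R P) x y
          = σ x y * ((g * f) x y - g x x * f x y) := by
        rw [mul_Ee_apply le_rfl, if_pos rfl, IncidenceAlgebra.mul_apply,
          IncidenceAlgebra.mul_apply]
        have hterm : ∀ z ∈ Icc x y, B (Ee x x) g x z * f z y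
            = σ x y * (g x z * f z y) - (if z = x then σ x y * (g x z * f z y) else 0) := by
          intro z hz
          rw [mem_Icc] at hz
          rw [MA x g x z, if_pos rfl]
          by_cases hzx : z = x
          · rw [if_pos hzx, if_pos hzx]; ring
          · rw [if_neg hzx, if_neg hzx]
            have hxz : x < z := lt_of_le_of_ne hz.1 (fun h' => hzx h'.symm)
            have hσ : σ x z = σ x y := by
              rcases eq_or_lt_of_le hz.2 with h'|h'
              · rw [h']
              · exact compat1 x z y hxz h'
            rw [hσ]; ring
        rw [Finset.sum_congr rfl hterm, Finset.sum_sub_distrib,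
          Finset.sum_ite_eq' (Icc x y) x (fun z => σ x y * (g x z * f z y)),
          if_pos (mem_Icc.mpr ⟨le_rfl, hxy⟩), mul_sub, Finset.mul_sum]
      have hA3 : ((Ee x x * f) * B (Ee y y) g : IncidenceAlgebra R P) x y
          = -(σ x y) * ((f * g) x y - f x y * g y y) := by
        rw [IncidenceAlgebra.mul_apply, IncidenceAlgebra.mul_apply]
        have hterm : ∀ z ∈ Icc x y, (Ee x x * f : IncidenceAlgebra R P) x z * B (Ee y y) g z y
            = -(σ x y) * (f x z * g z y) - (if z = y then -(σ x y) * (f x z * g z y) else 0) := by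
          intro z hz
          rw [mem_Icc] at hz
          rw [Ee_mul_apply le_rfl, if_pos rfl, MA y g z y, if_pos rfl]
          by_cases hzy : z = y
          · rw [if_pos hzy, if_pos hzy]; ring
          · rw [if_neg hzy, if_neg hzy]
            have hzy' : z < y := lt_of_le_of_ne hz.2 hzy
            have hσ : σ z y = σ x y := by
              rcases eq_or_lt_of_le hz.1 with h'|h'
              · rw [← h']
              · exact compat2 x z y h' hzy'
            rw [hσ]; ring
        rw [Finset.sum_congr rfl hterm, Finset.sum_sub_distrib,
          Finset.sum_ite_eq' (Icc x y) y (fun z => -(σ x y) * (f x z * g z y)),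
          if_pos (mem_Icc.mpr ⟨hxy, le_rfl⟩), mul_sub, Finset.mul_sum]
      rw [hA1, hA3] at h3
      by_cases hxy2 : x = y
      · subst hxy2
        rw [S1diag, mul_zero] at h3
        have hgf : (g * f : IncidenceAlgebra R P) x x = g x x * f x x := by
          rw [IncidenceAlgebra.mul_apply, Icc_self, Finset.sum_singleton]
        have hfg : (f * g : IncidenceAlgebra R P) x x = f x x * g x x := by
          rw [IncidenceAlgebra.mul_apply, Icc_self, Finset.sum_singleton]
        rw [hgf, hfg] at h3 ⊢
        linear_combination -h3
      · have hlt : x < y := lt_of_le_of_ne hxy hxy2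
        rw [Boff x y g hlt] at h3
        linear_combination -h3
    · rw [IncidenceAlgebra.apply_eq_zero_of_not_le hxy (B f g),
        IncidenceAlgebra.apply_eq_zero_of_not_le hxy (f * g),
        IncidenceAlgebra.apply_eq_zero_of_not_le hxy (g * f), sub_self, mul_zero]
  -- Jacobi identity
  intro f g h
  ext x y hxy
  rw [IncidenceAlgebra.add_apply, IncidenceAlgebra.add_apply, IncidenceAlgebra.zero_apply]
  have hpull : ∀ p q r : IncidenceAlgebra R P, B p (B q r) x y
      = σ x y * σ x y * ((p * (q * r - r * q) : IncidenceAlgebra R P) x y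
        - (((q * r - r * q) * p : IncidenceAlgebra R P)) x y) := by
    intro p q r
    rw [MC p (B q r) x y]
    have h1 : (p * B q r : IncidenceAlgebra R P) x y
        = σ x y * ((p * (q * r - r * q) : IncidenceAlgebra R P) x y) := by
      rw [IncidenceAlgebra.mul_apply, IncidenceAlgebra.mul_apply, Finset.mul_sum]
      refine Finset.sum_congr rfl fun z hz => ?_
      rw [mem_Icc] at hz
      rw [MC q r z y, IncidenceAlgebra.sub_apply]
      by_cases hzy : z = y
      · have e : (q * r : IncidenceAlgebra R P) z y - (r * q : IncidenceAlgebra R P) z y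
            = 0 := by
          rw [hzy, IncidenceAlgebra.mul_apply, IncidenceAlgebra.mul_apply, Icc_self,
            Finset.sum_singleton, Finset.sum_singleton]
          ring
        rw [e]; ring
      · have hσ : σ z y = σ x y := by
          rcases eq_or_lt_of_le hz.1 with h'|h'
          · rw [← h']
          · exact compat2 x z y h' (lt_of_le_of_ne hz.2 hzy)
        rw [hσ]; ring
    have h2 : (B q r * p : IncidenceAlgebra R P) x y
        = σ x y * (((q * r - r * q) * p : IncidenceAlgebra R P) x y) := by
      rw [IncidenceAlgebra.mul_apply, IncidenceAlgebra.mul_apply, Finset.mul_sum]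
      refine Finset.sum_congr rfl fun z hz => ?_
      rw [mem_Icc] at hz
      rw [MC q r x z, IncidenceAlgebra.sub_apply]
      by_cases hzx : z = x
      · have e : (q * r : IncidenceAlgebra R P) x z - (r * q : IncidenceAlgebra R P) x z
            = 0 := by
          rw [hzx, IncidenceAlgebra.mul_apply, IncidenceAlgebra.mul_apply, Icc_self,
            Finset.sum_singleton, Finset.sum_singleton]
          ring
        rw [e]; ring
      · have hσ : σ x z = σ x y := by
          rcases eq_or_lt_of_le hz.2 with h'|h'
          · rw [h']
          · exact compat1 x z y (lt_of_le_of_ne hz.1 (fun h'' => hzx h''.symm)) h'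
        rw [hσ]; ring
    rw [h1, h2]; ring
  rw [hpull f g h, hpull g h f, hpull h f g]
  have hzero : (f * (g * h - h * g) - (g * h - h * g) * f)
      + (g * (h * f - f * h) - (h * f - f * h) * g)
      + (h * (f * g - g * f) - (f * g - g * f) * h) = (0 : IncidenceAlgebra R P) := by
    noncomm_ring
  have hz := ev hzero x y
  rw [IncidenceAlgebra.add_apply, IncidenceAlgebra.add_apply, IncidenceAlgebra.sub_apply,
    IncidenceAlgebra.sub_apply, IncidenceAlgebra.sub_apply, IncidenceAlgebra.zero_apply] at hz
  linear_combination (σ x y * σ x y) * hz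
end

section
/- Suppose that the intersection of any two maximal chains of P has cardinality at least 2. Then every R-bilinear antisymmetric biderivation B of I(P,R) is inner: there exists r ∈ R such that B(f,g) = r·[f,g] for all f, g ∈ I(P,R). -/
/-!
Write `e_x` for the diagonal idempotents and `e_{xy}` for the matrix units of `I(P,R)`.
Leibniz rules applied to idempotents force `B(e_x, e_y) = 0`; then the `(a,b)` entry of
`B(e_x, f)` is `f(a,b) · B(e_x, e_{ab})(a,b)`, which vanishes unless `x ∈ {a, b}`, and the entries
for `x = a` and `x = b` are opposite. So `B(e_x, -)` is governed by the scalars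
`c(u,v) = B(e_u, e_{uv})(u,v)` for `u < v`. Brešar's identity `B(f,g) z [u,v] = [f,g] z B(u,v)`
gives `c(u,v) = c(p,q)` when `v ≤ p`, and the Leibniz rule gives `c(u,v) = c(u,w)` for
`u < w ≤ v`, so `c` is constant along every chain; as any two maximal chains share an edge,
`c` is a constant `r`. Then `D = B - r[-,-]` vanishes on every pair `(e_x, f)`, whence
`e_s D(f,g) e_t = D(e_s f e_t, e_s g e_t) = f(s,t) g(s,t) D(e_{st}, e_{st}) = 0`.
-/

section Biderivation

variable {R A : Type*} [CommSemiring R] [Ring A] [Algebra R A]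

structure IsBiderivation (B : A →ₗ[R] A →ₗ[R] A) : Prop where
  leibniz_left : ∀ f g h, B (f * g) h = B f h * g + f * B g h
  leibniz_right : ∀ f g h, B f (g * h) = B f g * h + g * B f h

variable (R A) in
def commutatorBilin : A →ₗ[R] A →ₗ[R] A := LinearMap.mul R A - (LinearMap.mul R A).flip

@[simp]
lemma commutatorBilin_apply (f g : A) : commutatorBilin R A f g = f * g - g * f := rfl

lemma isBiderivation_commutatorBilin : IsBiderivation (commutatorBilin R A) where
  leibniz_left f g h := by simp only [commutatorBilin_apply]; noncomm_ring
  leibniz_right f g h := by simp only [commutatorBilin_apply]; noncomm_ring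

namespace IsBiderivation

variable {B C : A →ₗ[R] A →ₗ[R] A}

lemma sub (hB : IsBiderivation B) (hC : IsBiderivation C) : IsBiderivation (B - C) where
  leibniz_left f g h := by
    simp only [LinearMap.sub_apply, hB.leibniz_left, hC.leibniz_left]; noncomm_ring
  leibniz_right f g h := by
    simp only [LinearMap.sub_apply, hB.leibniz_right, hC.leibniz_right]; noncomm_ring

lemma smul (hB : IsBiderivation B) (r : R) : IsBiderivation (r • B) where
  leibniz_left f g h := by
    simp only [LinearMap.smul_apply, hB.leibniz_left, smul_add, smul_mul_assoc, mul_smul_comm]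
  leibniz_right f g h := by
    simp only [LinearMap.smul_apply, hB.leibniz_right, smul_add, smul_mul_assoc, mul_smul_comm]

lemma apply_eq_of_isIdempotentElem_left (hB : IsBiderivation B) {e : A} (he : IsIdempotentElem e)
    (h : A) : B e h = B e h * e + e * B e h := by
  conv_lhs => rw [← he.eq]
  exact hB.leibniz_left e e h

lemma apply_eq_of_isIdempotentElem_right (hB : IsBiderivation B) {e : A}
    (he : IsIdempotentElem e) (h : A) : B h e = B h e * e + e * B h e := by
  conv_lhs => rw [← he.eq]
  exact hB.leibniz_right h e e

lemma apply_mul_mul_left (hB : IsBiderivation B) {e e' : A} (he : ∀ h, B e h = 0)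
    (he' : ∀ h, B e' h = 0) (f g : A) : B (e * f * e') g = e * B f g * e' := by
  rw [hB.leibniz_left, hB.leibniz_left, he, he', zero_mul, zero_add, mul_zero, add_zero]

lemma apply_mul_mul_right (hB : IsBiderivation B) {e e' : A} (he : ∀ h, B h e = 0)
    (he' : ∀ h, B h e' = 0) (f g : A) : B f (e * g * e') = e * B f g * e' := by
  rw [hB.leibniz_right, hB.leibniz_right, he, he', zero_mul, zero_add, mul_zero, add_zero]

lemma mul_commutator_eq (hB : IsBiderivation B) (f g u v : A) :
    B f g * (u * v - v * u) = (f * g - g * f) * B u v := by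
  have h₁ : B (f * u) (g * v) = (B f g * v + g * B f v) * u + f * (B u g * v + g * B u v) := by
    rw [hB.leibniz_left, hB.leibniz_right, hB.leibniz_right]
  have h₂ : B (f * u) (g * v) = (B f g * u + f * B u g) * v + g * (B f v * u + f * B u v) := by
    rw [hB.leibniz_right, hB.leibniz_left, hB.leibniz_left]
  rw [← sub_eq_zero, ← sub_eq_zero_of_eq (h₂.symm.trans h₁)]
  noncomm_ring

lemma mul_mul_commutator_eq (hB : IsBiderivation B) (f g z u v : A) :
    B f g * z * (u * v - v * u) = (f * g - g * f) * z * B u v := by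
  have h₁ := hB.mul_commutator_eq f g (z * u) v
  have h₂ := hB.mul_commutator_eq f g z v
  rw [hB.leibniz_left] at h₁
  calc B f g * z * (u * v - v * u)
      = B f g * (z * u * v - v * (z * u)) - B f g * (z * v - v * z) * u := by noncomm_ring
    _ = (f * g - g * f) * z * B u v := by rw [h₁, h₂]; noncomm_ring

end IsBiderivation

end Biderivation

namespace IncidenceAlgebra

variable {R P : Type*} [PartialOrder P] {x y z a b : P}

section Semiring

variable [Semiring R]

variable (R) in
open Classical in
/-- The matrix unit `e_{xy}`, which is `0` unless `x ≤ y`. -/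
noncomputable def single (x y : P) : IncidenceAlgebra R P :=
  ⟨fun a b => if a = x ∧ b = y ∧ x ≤ y then 1 else 0,
    fun _ _ hab => if_neg fun ⟨ha, hb, h⟩ => hab (ha ▸ hb ▸ h)⟩

variable [DecidableEq P]

lemma single_apply (h : x ≤ y) (a b : P) :
    single R x y a b = if a = x ∧ b = y then 1 else 0 := by
  simp [single, h]

variable [LocallyFiniteOrder P]

lemma single_mul_apply (h : x ≤ y) (f : IncidenceAlgebra R P) (a b : P) :
    (single R x y * f) a b = if a = x then f y b else 0 := by
  rw [mul_apply]
  split_ifs with ha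
  · subst ha
    rw [Finset.sum_eq_single y]
    · simp [single_apply h]
    · intro c _ hc
      simp [single_apply h, hc]
    · intro hy
      rw [apply_eq_zero_of_not_le fun hyb => hy (Finset.mem_Icc.2 ⟨h, hyb⟩), mul_zero]
  · exact Finset.sum_eq_zero fun c _ => by simp [single_apply h, ha]

lemma mul_single_apply (h : x ≤ y) (f : IncidenceAlgebra R P) (a b : P) :
    (f * single R x y) a b = if b = y then f a x else 0 := by
  rw [mul_apply]
  split_ifs with hb
  · subst hb
    rw [Finset.sum_eq_single x]
    · simp [single_apply h]
    · intro c _ hc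
      simp [single_apply h, hc]
    · intro hx
      rw [apply_eq_zero_of_not_le fun hax => hx (Finset.mem_Icc.2 ⟨hax, h⟩), zero_mul]
  · exact Finset.sum_eq_zero fun c _ => by simp [single_apply h, hb]

lemma single_mul_single (hxy : x ≤ y) (hyz : y ≤ z) :
    single R x y * single R y z = single R x z := by
  ext a b
  simp only [mul_single_apply hyz, single_apply hxy, single_apply (hxy.trans hyz)]
  split_ifs <;> simp_all

lemma single_mul_mul_single (f : IncidenceAlgebra R P) (h : a ≤ b) :
    single R a a * f * single R b b = f a b • single R a b := by
  ext c d
  simp only [mul_single_apply le_rfl, single_mul_apply le_rfl, constSMul_apply, single_apply h]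
  split_ifs <;> simp_all

lemma isIdempotentElem_single_self (x : P) : IsIdempotentElem (single R x x) :=
  single_mul_single le_rfl le_rfl

lemma isIdempotentElem_single_self_add (hxy : x ≠ y) :
    IsIdempotentElem (single R x x + single R y y) := by
  have hxy' : single R x x * single R y y = 0 := by
    ext a b; simp [mul_single_apply le_rfl, single_apply le_rfl, hxy.symm]
  have hyx' : single R y y * single R x x = 0 := by
    ext a b; simp [mul_single_apply le_rfl, single_apply le_rfl, hxy]
  simp only [IsIdempotentElem, add_mul, mul_add, hxy', hyx', (isIdempotentElem_single_self _).eq,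
    add_zero, zero_add]

lemma apply_eq_zero_of_eq_mul_single_add {f : IncidenceAlgebra R P}
    (hf : f = f * single R x x + single R x x * f) (ha : a ≠ x) (hb : b ≠ x) : f a b = 0 := by
  simpa [mul_single_apply le_rfl, single_mul_apply le_rfl, ha, hb] using congr($hf a b)

end Semiring

section Ring

variable [Ring R] [DecidableEq P] [LocallyFiniteOrder P]

lemma single_self_mul_single_sub (h : x < y) :
    single R x x * single R x y - single R x y * single R x x = single R x y := by
  ext a b
  simp [single_mul_apply le_rfl, mul_single_apply le_rfl, single_apply h.le, h.ne, ite_and]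

lemma apply_eq_zero_of_eq_mul_single_add_single_add {f : IncidenceAlgebra R P} (hxy : x ≠ y)
    (hf : f = f * (single R x x + single R y y) + (single R x x + single R y y) * f)
    (ha : a = x ∨ a = y) (hb : b = x ∨ b = y) : f a b = 0 := by
  have := congr($hf a b)
  simp only [mul_add, add_mul, add_apply, mul_single_apply le_rfl, single_mul_apply le_rfl] at this
  rcases ha with rfl | rfl <;> rcases hb with rfl | rfl <;> simpa [hxy, hxy.symm] using this

end Ring

end IncidenceAlgebra

namespace IncidenceAlgebra

variable {R P : Type*} [CommRing R] [PartialOrder P] [LocallyFiniteOrder P] [DecidableEq P]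
  {B : IncidenceAlgebra R P →ₗ[R] IncidenceAlgebra R P →ₗ[R] IncidenceAlgebra R P}
  {u v w p q x a b : P}

variable (B) in
noncomputable def edgeCoeff (u v : P) : R :=
  B (single R u u) (single R u v) u v

lemma apply_single_self_single_self (hB : IsBiderivation B) (hB' : B.IsAlt) (x y : P) :
    B (single R x x) (single R y y) = 0 := by
  rcases eq_or_ne x y with rfl | hxy
  · exact hB'.self_eq_zero _
  have hX_x := hB.apply_eq_of_isIdempotentElem_left (isIdempotentElem_single_self x) (single R y y)
  have hX_y := hB.apply_eq_of_isIdempotentElem_right (isIdempotentElem_single_self y) (single R x x)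
  have hX_xy := hB.apply_eq_of_isIdempotentElem_right (isIdempotentElem_single_self_add hxy)
    (single R x x)
  rw [map_add, hB'.self_eq_zero, zero_add] at hX_xy
  ext a b -
  by_cases hx : a ≠ x ∧ b ≠ x
  · exact apply_eq_zero_of_eq_mul_single_add hX_x hx.1 hx.2
  by_cases hy : a ≠ y ∧ b ≠ y
  · exact apply_eq_zero_of_eq_mul_single_add hX_y hy.1 hy.2
  exact apply_eq_zero_of_eq_mul_single_add_single_add hxy hX_xy (by grind) (by grind)

lemma apply_single_self_apply (hB : IsBiderivation B) (hB' : B.IsAlt) (x : P)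
    (f : IncidenceAlgebra R P) (hab : a ≤ b) :
    B (single R x x) f a b = f a b * B (single R x x) (single R a b) a b := by
  have key : B (single R x x) (single R a a * f * single R b b)
      = single R a a * B (single R x x) f * single R b b := by
    rw [hB.leibniz_right, hB.leibniz_right, apply_single_self_single_self hB hB',
      apply_single_self_single_self hB hB']
    simp only [zero_mul, mul_zero, zero_add, add_zero]
  rw [single_mul_mul_single _ hab, single_mul_mul_single _ hab, map_smul] at key
  simpa [single_apply hab] using congr($key a b).symm

lemma apply_single_self_single_apply_of_ne (hB : IsBiderivation B) (hxa : x ≠ a) (hxb : x ≠ b) :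
    B (single R x x) (single R a b) a b = 0 :=
  apply_eq_zero_of_eq_mul_single_add
    (hB.apply_eq_of_isIdempotentElem_left (isIdempotentElem_single_self x) _) hxa.symm hxb.symm

lemma apply_single_self_single_apply_eq_neg_edgeCoeff (hB : IsBiderivation B) (hab : a ≠ b) :
    B (single R b b) (single R a b) a b = -edgeCoeff B a b := by
  have h := hB.apply_eq_of_isIdempotentElem_left (isIdempotentElem_single_self_add hab)
    (single R a b)
  have := apply_eq_zero_of_eq_mul_single_add_single_add hab h (.inl rfl) (.inr rfl)
  rw [map_add, LinearMap.add_apply, add_apply] at this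
  exact (neg_eq_of_add_eq_zero_right this).symm

lemma edgeCoeff_eq_of_le (hB : IsBiderivation B) (huv : u < v) (hvp : v ≤ p) (hpq : p < q) :
    edgeCoeff B u v = edgeCoeff B p q := by
  have h := congr($(hB.mul_mul_commutator_eq (single R u u) (single R u v) (single R v p)
    (single R p p) (single R p q)) u q)
  rwa [single_self_mul_single_sub hpq, single_self_mul_single_sub huv, mul_single_apply hpq.le,
    if_pos rfl, mul_single_apply hvp, if_pos rfl, single_mul_single huv.le hvp,
    single_mul_apply (huv.le.trans hvp), if_pos rfl] at h

lemma edgeCoeff_eq_of_lt_of_le (hB : IsBiderivation B) (huw : u < w) (hwv : w ≤ v) :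
    edgeCoeff B u v = edgeCoeff B u w := by
  have h := congr($(hB.leibniz_right (single R u u) (single R u w) (single R w v)) u v)
  rwa [single_mul_single huw.le hwv, add_apply, mul_single_apply hwv, if_pos rfl,
    single_mul_apply huw.le, if_pos rfl,
    apply_single_self_single_apply_of_ne hB huw.ne (huw.trans_le hwv).ne, add_zero] at h

lemma edgeCoeff_eq_of_isChain (hB : IsBiderivation B) {C : Set P} (hC : IsChain (· ≤ ·) C)
    (hu : u ∈ C) (hv : v ∈ C) (hp : p ∈ C) (hq : q ∈ C) (huv : u < v) (hpq : p < q) :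
    edgeCoeff B u v = edgeCoeff B p q := by
  wlog hup : u ≤ p generalizing u v p q
  · exact (this hp hq hu hv hpq huv ((hC.total hu hp).resolve_left hup)).symm
  rcases hC.total hv hp with hvp | hpv
  · exact edgeCoeff_eq_of_le hB huv hvp hpq
  rcases hup.lt_or_eq with hup | rfl
  · rw [edgeCoeff_eq_of_lt_of_le hB hup hpv]
    exact edgeCoeff_eq_of_le hB hup le_rfl hpq
  rcases hC.total hv hq with hvq | hqv
  · exact (edgeCoeff_eq_of_lt_of_le hB huv hvq).symm
  · exact edgeCoeff_eq_of_lt_of_le hB hpq hqv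

lemma apply_single_self_eq_zero (hB : IsBiderivation B) (hB' : B.IsAlt)
    (h : ∀ u v, u < v → edgeCoeff B u v = 0) (x : P) (f : IncidenceAlgebra R P) :
    B (single R x x) f = 0 := by
  ext a b hab
  rw [apply_single_self_apply hB hB' x f hab, zero_apply]
  suffices B (single R x x) (single R a b) a b = 0 by rw [this, mul_zero]
  rcases hab.eq_or_lt with rfl | hab
  · rw [apply_single_self_single_self hB hB', zero_apply]
  rcases eq_or_ne x a with rfl | hxa
  · exact h x b hab
  rcases eq_or_ne x b with rfl | hxb
  · rw [apply_single_self_single_apply_eq_neg_edgeCoeff hB hab.ne, h a x hab, neg_zero]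
  exact apply_single_self_single_apply_of_ne hB hxa hxb

lemma eq_zero_of_apply_single_self_eq_zero (hB : IsBiderivation B) (hB' : B.IsAlt)
    (h : ∀ x f, B (single R x x) f = 0) : B = 0 := by
  have h' : ∀ x f, B f (single R x x) = 0 := fun x f => by rw [← hB'.neg, h, neg_zero]
  ext f g s t hst
  have key : single R s s * B f g * single R t t
      = B (single R s s * f * single R t t) (single R s s * g * single R t t) := by
    rw [hB.apply_mul_mul_left (h s) (h t), hB.apply_mul_mul_right (h' s) (h' t)]
    simp only [← mul_assoc, (isIdempotentElem_single_self s).eq]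
    rw [mul_assoc _ (single R t t), (isIdempotentElem_single_self t).eq]
  simp only [single_mul_mul_single _ hst, map_smul, LinearMap.smul_apply, hB'.self_eq_zero,
    smul_zero] at key
  simpa [single_apply hst] using congr($key s t)

lemma eq_smul_commutatorBilin_of_edgeCoeff_eq (hB : IsBiderivation B) (hB' : B.IsAlt) {r : R}
    (h : ∀ u v, u < v → edgeCoeff B u v = r) : B = r • commutatorBilin R _ := by
  rw [← sub_eq_zero]
  have hD := hB.sub (isBiderivation_commutatorBilin.smul r)
  have hD' : (B - r • commutatorBilin R _).IsAlt := fun f => by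
    simp [hB'.self_eq_zero]
  refine eq_zero_of_apply_single_self_eq_zero hD hD' (apply_single_self_eq_zero hD hD' ?_)
  intro u v huv
  simpa [edgeCoeff, single_self_mul_single_sub huv, single_apply huv.le, sub_eq_zero]
    using h u v huv

end IncidenceAlgebra

section MaxChain

variable {P α : Type*} [PartialOrder P]

lemma IsChain.exists_lt_of_nontrivial {C : Set P} (hC : IsChain (· ≤ ·) C) (h : C.Nontrivial) :
    ∃ a ∈ C, ∃ b ∈ C, a < b := by
  obtain ⟨a, ha, b, hb, hab⟩ := h
  rcases hC.total ha hb with h | h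
  exacts [⟨a, ha, b, hb, h.lt_of_ne hab⟩, ⟨b, hb, a, ha, h.lt_of_ne hab.symm⟩]

lemma exists_forall_lt_eq_of_maxChains_inter {φ : P → P → α}
    (hP : ∀ C D : Set P, IsMaxChain (· ≤ ·) C → IsMaxChain (· ≤ ·) D → (C ∩ D).Nontrivial)
    (hφ : ∀ C : Set P, IsChain (· ≤ ·) C →
      ∀ u ∈ C, ∀ v ∈ C, ∀ p ∈ C, ∀ q ∈ C, u < v → p < q → φ u v = φ p q) :
    ∃ r, ∀ u v, u < v → φ u v = r := by
  obtain ⟨C₀, hC₀, -⟩ := (IsChain.empty : IsChain (· ≤ ·) (∅ : Set P)).exists_maxChain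
  obtain ⟨u₀, hu₀, v₀, hv₀, huv₀⟩ :=
    hC₀.isChain.exists_lt_of_nontrivial (by simpa using hP C₀ C₀ hC₀ hC₀)
  refine ⟨φ u₀ v₀, fun u v huv => ?_⟩
  obtain ⟨C, hC, huvC⟩ := (IsChain.pair huv.le).exists_maxChain
  obtain ⟨a, ha, b, hb, hab⟩ :=
    (hC.isChain.mono Set.inter_subset_left).exists_lt_of_nontrivial (hP C C₀ hC hC₀)
  exact (hφ C hC.isChain u (huvC (.inl rfl)) v (huvC (.inr rfl)) a ha.1 b hb.1 huv hab).trans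
    (hφ C₀ hC₀.isChain a ha.2 b hb.2 u₀ hu₀ v₀ hv₀ hab huv₀)

end MaxChain

/-- If the intersection of any two maximal chains of `P` has cardinality at
least `2`, then every `R`-bilinear antisymmetric biderivation of `I(P,R)` is inner: there is
`r ∈ R` with `B f g = r • [f, g]` for all `f, g`. -/
theorem antisymm_bider_inner_of_maxChains_intersect
    {R P : Type*} [CommRing R] [PartialOrder P] [LocallyFiniteOrder P] [DecidableEq P]
    (hP : ∀ C D : Set P, IsMaxChain (· ≤ ·) C → IsMaxChain (· ≤ ·) D → (C ∩ D).Nontrivial)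
    (B : IncidenceAlgebra R P → IncidenceAlgebra R P → IncidenceAlgebra R P)
    (hadd_l : ∀ f g h, B (f + g) h = B f h + B g h)
    (hadd_r : ∀ f g h, B f (g + h) = B f g + B f h)
    (hsmul_l : ∀ (r : R) (f g), B (r • f) g = r • B f g)
    (hsmul_r : ∀ (r : R) (f g), B f (r • g) = r • B f g)
    (hder_l : ∀ f g h, B (f * g) h = B f h * g + f * B g h)
    (hder_r : ∀ f g h, B f (g * h) = B f g * h + g * B f h)
    (hanti : ∀ f, B f f = 0)
    :
    ∃ r : R, ∀ f g : IncidenceAlgebra R P, B f g = r • (f * g - g * f) := by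
  let B' : IncidenceAlgebra R P →ₗ[R] IncidenceAlgebra R P →ₗ[R] IncidenceAlgebra R P :=
    LinearMap.mk₂ R B hadd_l hsmul_l hadd_r hsmul_r
  have hB : IsBiderivation B' := ⟨hder_l, hder_r⟩
  have hB' : B'.IsAlt := hanti
  obtain ⟨r, hr⟩ := exists_forall_lt_eq_of_maxChains_inter (φ := IncidenceAlgebra.edgeCoeff B') hP
    fun _ hC _ hu _ hv _ hp _ hq ↦ IncidenceAlgebra.edgeCoeff_eq_of_isChain hB hC hu hv hp hq
  have hBr := IncidenceAlgebra.eq_smul_commutatorBilin_of_edgeCoeff_eq hB hB' hr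
  exact ⟨r, fun f g ↦ (LinearMap.congr_fun₂ hBr f g).trans (by simp)⟩
end

section
/- Let σ be a map assigning to each pair x < y in P an element σ(x,y) ∈ R which is constant on chains. Then the bracket {f,g} defined by {f,g}(x,x) = 0 for all x ∈ P and {f,g}(x,y) = σ(x,y)·[f,g](x,y) for all x < y is a Poisson structure on I(P,R): it is R-bilinear, satisfies {f,f} = 0, the Jacobi identity {f,{g,h}} + {g,{h,f}} + {h,{f,g}} = 0, and the Leibniz rule {f, gh} = {f,g}h + g{f,h}. -/
/-- If `σ : P²_< → R` is constant on chains, then the bracket defined by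
`{f,g}(x,x) = 0` and `{f,g}(x,y) = σ(x,y)[f,g](x,y)` for `x < y` is a Poisson structure on
`I(P,R)`: it is `R`-bilinear, alternating, satisfies the Jacobi identity and the Leibniz rule. -/
theorem sigma_bracket_is_poisson_structure
    {R P : Type*} [CommRing R] [PartialOrder P] [LocallyFiniteOrder P] [DecidableEq P]
    (σ : P → P → R)
    (hσ : ∀ x y u v : P, x < y → u < v → IsChain (· ≤ ·) ({x, y, u, v} : Set P) →
      σ x y = σ u v)
    (bracket : IncidenceAlgebra R P → IncidenceAlgebra R P → IncidenceAlgebra R P)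
    (h_diag : ∀ (f g : IncidenceAlgebra R P) (x : P), bracket f g x x = 0)
    (h_lt : ∀ (f g : IncidenceAlgebra R P) (x y : P), x < y →
      bracket f g x y = σ x y * (f * g - g * f) x y) :
    (∀ f g h, bracket (f + g) h = bracket f h + bracket g h) ∧
    (∀ f g h, bracket f (g + h) = bracket f g + bracket f h) ∧
    (∀ (r : R) (f g), bracket (r • f) g = r • bracket f g) ∧
    (∀ (r : R) (f g), bracket f (r • g) = r • bracket f g) ∧
    (∀ f, bracket f f = 0) ∧
    (∀ f g h, bracket f (bracket g h) + bracket g (bracket h f) +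
      bracket h (bracket f g) = 0) ∧
    (∀ f g h, bracket f (g * h) = bracket f g * h + g * bracket f h) := by
  classical
  -- σ is constant on chains, in the two forms we need
  have hσ₂ : ∀ x z y : P, x < z → z ≤ y → x < y → σ x z = σ x y := by
    intro x z y hxz hzy hxy
    apply hσ x z x y hxz hxy
    rintro u hu v hv -
    simp only [Set.mem_insert_iff, Set.mem_singleton_iff] at hu hv
    have h1 : x ≤ z := hxz.le
    have h2 : x ≤ y := hxy.le
    have h3 : z ≤ y := hzy
    rcases hu with rfl | rfl | rfl | rfl <;> rcases hv with rfl | rfl | rfl | rfl <;>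
      first | exact Or.inl le_rfl | exact Or.inl ‹_› | exact Or.inr ‹_›
  have hσ₁ : ∀ x z y : P, x ≤ z → z < y → x < y → σ z y = σ x y := by
    intro x z y hxz hzy hxy
    apply hσ z y x y hzy hxy
    rintro u hu v hv -
    simp only [Set.mem_insert_iff, Set.mem_singleton_iff] at hu hv
    have h1 : x ≤ z := hxz
    have h2 : x ≤ y := hxy.le
    have h3 : z ≤ y := hzy.le
    rcases hu with rfl | rfl | rfl | rfl <;> rcases hv with rfl | rfl | rfl | rfl <;>
      first | exact Or.inl le_rfl | exact Or.inl ‹_› | exact Or.inr ‹_›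
  -- commutators vanish on the diagonal
  have comm_diag : ∀ (f g : IncidenceAlgebra R P) (x : P), (f * g - g * f) x x = 0 := by
    intro f g x
    rw [IncidenceAlgebra.sub_apply, IncidenceAlgebra.mul_apply, IncidenceAlgebra.mul_apply]
    simp [Finset.Icc_self, mul_comm]
  -- pulling σ out of a product with a bracket on the left
  have mulR : ∀ (f g h : IncidenceAlgebra R P) (x y : P), x < y →
      (bracket f g * h) x y = σ x y * ((f * g - g * f) * h) x y := by
    intro f g h x y hxy
    rw [IncidenceAlgebra.mul_apply, IncidenceAlgebra.mul_apply, Finset.mul_sum]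
    refine Finset.sum_congr rfl fun z hz => ?_
    obtain ⟨hxz, hzy⟩ := Finset.mem_Icc.mp hz
    rcases eq_or_lt_of_le hxz with rfl | hxz'
    · rw [h_diag, comm_diag]; ring
    · rw [h_lt _ _ _ _ hxz', hσ₂ x z y hxz' hzy hxy]; ring
  -- pulling σ out of a product with a bracket on the right
  have mulL : ∀ (f g h : IncidenceAlgebra R P) (x y : P), x < y →
      (f * bracket g h) x y = σ x y * (f * (g * h - h * g)) x y := by
    intro f g h x y hxy
    rw [IncidenceAlgebra.mul_apply, IncidenceAlgebra.mul_apply, Finset.mul_sum]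
    refine Finset.sum_congr rfl fun z hz => ?_
    obtain ⟨hxz, hzy⟩ := Finset.mem_Icc.mp hz
    rcases eq_or_lt_of_le hzy with rfl | hzy'
    · rw [h_diag, comm_diag]; ring
    · rw [h_lt _ _ _ _ hzy', hσ₁ x z y hxz hzy' hxy]; ring
  refine ⟨?_, ?_, ?_, ?_, ?_, ?_, ?_⟩
  · -- additivity in the first argument
    intro f g h
    ext x y hxy
    rw [IncidenceAlgebra.add_apply]
    rcases eq_or_lt_of_le hxy with rfl | hlt
    · simp [h_diag]
    · have e : (f + g) * h - h * (f + g) = (f * h - h * f) + (g * h - h * g) := by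
        noncomm_ring
      rw [h_lt _ _ _ _ hlt, h_lt _ _ _ _ hlt, h_lt _ _ _ _ hlt, e,
        IncidenceAlgebra.add_apply, mul_add]
  · -- additivity in the second argument
    intro f g h
    ext x y hxy
    rw [IncidenceAlgebra.add_apply]
    rcases eq_or_lt_of_le hxy with rfl | hlt
    · simp [h_diag]
    · have e : f * (g + h) - (g + h) * f = (f * g - g * f) + (f * h - h * f) := by
        noncomm_ring
      rw [h_lt _ _ _ _ hlt, h_lt _ _ _ _ hlt, h_lt _ _ _ _ hlt, e,
        IncidenceAlgebra.add_apply, mul_add]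
  · -- homogeneity in the first argument
    intro r f g
    ext x y hxy
    rw [IncidenceAlgebra.constSMul_apply, smul_eq_mul]
    rcases eq_or_lt_of_le hxy with rfl | hlt
    · simp [h_diag]
    · have e : (r • f) * g - g * (r • f) = r • (f * g - g * f) := by
        rw [smul_mul_assoc, mul_smul_comm, ← smul_sub]
      rw [h_lt _ _ _ _ hlt, h_lt _ _ _ _ hlt, e, IncidenceAlgebra.constSMul_apply,
        smul_eq_mul]
      ring
  · -- homogeneity in the second argument
    intro r f g
    ext x y hxy
    rw [IncidenceAlgebra.constSMul_apply, smul_eq_mul]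
    rcases eq_or_lt_of_le hxy with rfl | hlt
    · simp [h_diag]
    · have e : f * (r • g) - (r • g) * f = r • (f * g - g * f) := by
        rw [smul_mul_assoc, mul_smul_comm, ← smul_sub]
      rw [h_lt _ _ _ _ hlt, h_lt _ _ _ _ hlt, e, IncidenceAlgebra.constSMul_apply,
        smul_eq_mul]
      ring
  · -- alternating
    intro f
    ext x y hxy
    rw [IncidenceAlgebra.zero_apply]
    rcases eq_or_lt_of_le hxy with rfl | hlt
    · exact h_diag f f x
    · rw [h_lt _ _ _ _ hlt, sub_self, IncidenceAlgebra.zero_apply, mul_zero]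
  · -- Jacobi identity
    intro f g h
    ext x y hxy
    rw [IncidenceAlgebra.add_apply, IncidenceAlgebra.add_apply, IncidenceAlgebra.zero_apply]
    rcases eq_or_lt_of_le hxy with rfl | hlt
    · simp [h_diag]
    · have jac : (f * (g * h - h * g) - (g * h - h * g) * f) +
          (g * (h * f - f * h) - (h * f - f * h) * g) +
          (h * (f * g - g * f) - (f * g - g * f) * h) = 0 := by noncomm_ring
      have jac' := congrArg (fun A : IncidenceAlgebra R P => A x y) jac
      simp only [IncidenceAlgebra.add_apply, IncidenceAlgebra.sub_apply,
        IncidenceAlgebra.zero_apply] at jac'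
      rw [h_lt _ _ _ _ hlt, h_lt _ _ _ _ hlt, h_lt _ _ _ _ hlt,
        IncidenceAlgebra.sub_apply, IncidenceAlgebra.sub_apply, IncidenceAlgebra.sub_apply,
        mulL f g h x y hlt, mulR g h f x y hlt,
        mulL g h f x y hlt, mulR h f g x y hlt,
        mulL h f g x y hlt, mulR f g h x y hlt]
      linear_combination (σ x y * σ x y) * jac'
  · -- Leibniz rule
    intro f g h
    ext x y hxy
    rw [IncidenceAlgebra.add_apply]
    rcases eq_or_lt_of_le hxy with rfl | hlt
    · simp [IncidenceAlgebra.mul_apply, Finset.Icc_self, h_diag]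
    · have e : f * (g * h) - (g * h) * f = (f * g - g * f) * h + g * (f * h - h * f) := by
        noncomm_ring
      have e' := congrArg (fun A : IncidenceAlgebra R P => A x y) e
      simp only [IncidenceAlgebra.add_apply, IncidenceAlgebra.sub_apply] at e'
      rw [h_lt _ _ _ _ hlt, IncidenceAlgebra.sub_apply,
        mulR f g h x y hlt, mulL g f h x y hlt]
      linear_combination σ x y * e'
end

section
/- Let {,} be a Poisson structure on I(P,R). Then there exists a unique map σ, assigning to each pair x < y in P an element σ(x,y) ∈ R and constant on chains, such that for all f, g ∈ I(P,R): {f,g}(x,x) = 0 for all x ∈ P, and {f,g}(x,y) = σ(x,y)·[f,g](x,y) for all x < y in P. -/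
open Finset

set_option linter.unusedSectionVars false
namespace PoissonIAHelper

variable {R P : Type*} [CommRing R] [PartialOrder P] [LocallyFiniteOrder P] [DecidableEq P]

open scoped Classical in
/-- The "matrix unit" `E_{xy}` of the incidence algebra. -/
noncomputable def sing (x y : P) : IncidenceAlgebra R P :=
  ⟨fun a b => if a = x ∧ b = y ∧ a ≤ b then 1 else 0, by
    intro a b h
    rw [if_neg]
    rintro ⟨-, -, hab⟩
    exact h hab⟩

open scoped Classical in
lemma sing_apply (x y a b : P) :
    (sing x y : IncidenceAlgebra R P) a b = if a = x ∧ b = y ∧ a ≤ b then 1 else 0 := rfl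

lemma sing_apply_self {x y : P} (h : x ≤ y) : (sing x y : IncidenceAlgebra R P) x y = 1 := by
  classical
  rw [sing_apply, if_pos ⟨rfl, rfl, h⟩]

lemma sing_apply_ne {x y a b : P} (h : ¬(a = x ∧ b = y)) :
    (sing x y : IncidenceAlgebra R P) a b = 0 := by
  classical
  rw [sing_apply, if_neg]
  rintro ⟨h1, h2, -⟩
  exact h ⟨h1, h2⟩

lemma mul_sing_eq {x y : P} (h : x ≤ y) (m : IncidenceAlgebra R P) (a : P) :
    ((m * sing x y : IncidenceAlgebra R P)) a y = m a x := by
  classical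
  rw [IncidenceAlgebra.mul_apply]
  by_cases hm : x ∈ Icc a y
  · rw [Finset.sum_eq_single_of_mem x hm]
    · rw [sing_apply_self h, mul_one]
    · intro z hz hzx
      rw [sing_apply_ne (by tauto), mul_zero]
  · rw [Finset.sum_eq_zero, eq_comm]
    · rw [mem_Icc] at hm
      push_neg at hm
      exact IncidenceAlgebra.apply_eq_zero_of_not_le (fun hax => (hm hax) h) m
    · intro z hz
      rcases eq_or_ne z x with rfl | hzx
      · exact absurd hz hm
      · rw [sing_apply_ne (by tauto), mul_zero]

lemma mul_sing_ne {x y a b : P} (h : b ≠ y) (m : IncidenceAlgebra R P) :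
    ((m * sing x y : IncidenceAlgebra R P)) a b = 0 := by
  rw [IncidenceAlgebra.mul_apply, Finset.sum_eq_zero]
  intro z hz
  rw [sing_apply_ne (by tauto), mul_zero]

lemma sing_mul_eq {x y : P} (h : x ≤ y) (m : IncidenceAlgebra R P) (b : P) :
    ((sing x y * m : IncidenceAlgebra R P)) x b = m y b := by
  classical
  rw [IncidenceAlgebra.mul_apply]
  by_cases hm : y ∈ Icc x b
  · rw [Finset.sum_eq_single_of_mem y hm]
    · rw [sing_apply_self h, one_mul]
    · intro z hz hzy
      rw [sing_apply_ne (by tauto), zero_mul]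
  · rw [Finset.sum_eq_zero, eq_comm]
    · rw [mem_Icc] at hm
      push_neg at hm
      exact IncidenceAlgebra.apply_eq_zero_of_not_le (hm h) m
    · intro z hz
      rcases eq_or_ne z y with rfl | hzy
      · exact absurd hz hm
      · rw [sing_apply_ne (by tauto), zero_mul]

lemma sing_mul_ne {x y a b : P} (h : a ≠ x) (m : IncidenceAlgebra R P) :
    ((sing x y * m : IncidenceAlgebra R P)) a b = 0 := by
  rw [IncidenceAlgebra.mul_apply, Finset.sum_eq_zero]
  intro z hz
  rw [sing_apply_ne (by tauto), zero_mul]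

lemma e_mul (x : P) (m : IncidenceAlgebra R P) (b : P) : ((sing x x * m : IncidenceAlgebra R P)) x b = m x b :=
  sing_mul_eq le_rfl m b

lemma mul_e (y : P) (m : IncidenceAlgebra R P) (a : P) : ((m * sing y y : IncidenceAlgebra R P)) a y = m a y :=
  mul_sing_eq le_rfl m a

lemma sing_mul_sing {x y z : P} (hxy : x ≤ y) (hyz : y ≤ z) :
    (sing x y * sing y z : IncidenceAlgebra R P) = sing x z := by
  ext a b hab
  rcases eq_or_ne a x with rfl | hax
  · rw [sing_mul_eq hxy]
    rcases eq_or_ne b z with rfl | hbz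
    · rw [sing_apply_self hyz, sing_apply_self (hxy.trans hyz)]
    · rw [sing_apply_ne (by tauto), sing_apply_ne (by tauto)]
  · rw [sing_mul_ne hax, sing_apply_ne (by tauto)]

lemma sandwich (x y : P) (g : IncidenceAlgebra R P) :
    sing x x * (g * sing y y) = g x y • (sing x y : IncidenceAlgebra R P) := by
  ext a b hab
  rw [IncidenceAlgebra.constSMul_apply, smul_eq_mul]
  rcases eq_or_ne a x with rfl | hax
  · rw [e_mul]
    rcases eq_or_ne b y with rfl | hby
    · rw [mul_e, sing_apply_self hab, mul_one]
    · rw [mul_sing_ne hby, sing_apply_ne (by tauto), mul_zero]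
  · rw [sing_mul_ne hax, sing_apply_ne (by tauto), mul_zero]

lemma e_mul_e_ne {x y : P} (h : x ≠ y) : (sing x x * sing y y : IncidenceAlgebra R P) = 0 := by
  ext a b hab
  rcases eq_or_ne a x with rfl | hax
  · rw [e_mul, sing_apply_ne (by tauto), IncidenceAlgebra.zero_apply]
  · rw [sing_mul_ne hax, IncidenceAlgebra.zero_apply]

lemma mul_apply_self (A B : IncidenceAlgebra R P) (x : P) : (A * B) x x = A x x * B x x := by
  rw [IncidenceAlgebra.mul_apply, Finset.Icc_self, Finset.sum_singleton]

lemma sing_eq_zero_of_not_le {x y : P} (h : ¬ x ≤ y) : (sing x y : IncidenceAlgebra R P) = 0 := by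
  ext a b hab
  rw [IncidenceAlgebra.zero_apply, sing_apply_ne]
  rintro ⟨rfl, rfl⟩
  exact h hab

lemma zero_smul' (X : IncidenceAlgebra R P) : (0 : R) • X = 0 := by
  ext a b hab
  rw [IncidenceAlgebra.constSMul_apply, smul_eq_mul, zero_mul, IncidenceAlgebra.zero_apply]

end PoissonIAHelper

open Finset PoissonIAHelper in
set_option maxHeartbeats 1600000 in
/-- Every Poisson structure on `I(P,R)` (with `R` a nontrivial commutative
ring) is given by a unique map `σ : P²_< → R` which is constant on chains, via
`{f,g}(x,x) = 0` and `{f,g}(x,y) = σ(x,y)[f,g](x,y)` for `x < y`. -/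
theorem poisson_structure_eq_unique_sigma_commutator
    {R P : Type*} [CommRing R] [Nontrivial R] [PartialOrder P] [LocallyFiniteOrder P]
    [DecidableEq P]
    (bracket : IncidenceAlgebra R P → IncidenceAlgebra R P → IncidenceAlgebra R P)
    (hadd_l : ∀ f g h, bracket (f + g) h = bracket f h + bracket g h)
    (hadd_r : ∀ f g h, bracket f (g + h) = bracket f g + bracket f h)
    (hsmul_l : ∀ (r : R) (f g), bracket (r • f) g = r • bracket f g)
    (hsmul_r : ∀ (r : R) (f g), bracket f (r • g) = r • bracket f g)
    (halt : ∀ f, bracket f f = 0)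
    (hjacobi : ∀ f g h, bracket f (bracket g h) + bracket g (bracket h f) +
      bracket h (bracket f g) = 0)
    (hleibniz : ∀ f g h, bracket f (g * h) = bracket f g * h + g * bracket f h)
    :
    ∃! σ : {p : P × P // p.1 < p.2} → R,
      (∀ p q : {p : P × P // p.1 < p.2},
        IsChain (· ≤ ·) ({p.1.1, p.1.2, q.1.1, q.1.2} : Set P) → σ p = σ q) ∧
      ∀ f g : IncidenceAlgebra R P,
        (∀ x : P, bracket f g x x = 0) ∧
        (∀ p : {p : P × P // p.1 < p.2},
          bracket f g p.1.1 p.1.2 = σ p * (f * g - g * f) p.1.1 p.1.2) := by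
  classical
  have happ : ∀ {A B : IncidenceAlgebra R P}, A = B → ∀ a b : P, A a b = B a b := by
    intro A B h a b; rw [h]
  -- bracket of zero
  have hzr : ∀ f, bracket f 0 = 0 := by
    intro f
    have h := hsmul_r 0 f 0
    rwa [zero_smul' (0 : IncidenceAlgebra R P), zero_smul'] at h
  -- antisymmetry
  have hneg : ∀ f g, bracket g f = - bracket f g := by
    intro f g
    have h := halt (f + g)
    rw [hadd_l, hadd_r, hadd_r, halt, halt, zero_add, add_zero, add_comm] at h
    exact eq_neg_of_add_eq_zero_left h
  -- localization identity
  have L1 : ∀ (f g : IncidenceAlgebra R P) (x y : P), bracket f g x y =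
      bracket f (sing x x * (g * sing y y)) x y
      - (bracket f (sing x x) * (g * sing y y) : IncidenceAlgebra R P) x y
      - (sing x x * (g * bracket f (sing y y)) : IncidenceAlgebra R P) x y := by
    intro f g x y
    have h1 : bracket f (sing x x * (g * sing y y)) x y
        = ((bracket f (sing x x) * (g * sing y y)
          + (sing x x * (bracket f g * sing y y)
          + sing x x * (g * bracket f (sing y y)))) : IncidenceAlgebra R P) x y := by
      rw [hleibniz f (sing x x) (g * sing y y), hleibniz f g (sing y y), mul_add]
    rw [IncidenceAlgebra.add_apply, IncidenceAlgebra.add_apply, e_mul, mul_e] at h1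
    linear_combination - h1
  -- diagonal of bracket with idempotent
  have hBediag : ∀ (f : IncidenceAlgebra R P) (x : P), bracket f (sing x x) x x = 0 := by
    intro f x
    have h := hleibniz f (sing x x) (sing x x)
    rw [sing_mul_sing le_rfl le_rfl] at h
    have h1 := happ h x x
    rw [IncidenceAlgebra.add_apply, mul_e, e_mul] at h1
    linear_combination - h1
  -- cross support of bracket with idempotent
  have hcross : ∀ (f : IncidenceAlgebra R P) (x u v : P), u ≠ x → v ≠ x →
      bracket f (sing x x) u v = 0 := by
    intro f x u v hu hv
    have h := hleibniz f (sing x x) (sing x x)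
    rw [sing_mul_sing le_rfl le_rfl] at h
    have h1 := happ h u v
    rw [IncidenceAlgebra.add_apply, mul_sing_ne hv, sing_mul_ne hu, add_zero] at h1
    linear_combination h1
  -- bracket of two idempotents vanishes
  have hBee : ∀ x y : P, bracket (sing x x) (sing y y) = 0 := by
    intro x y
    rcases eq_or_ne x y with rfl | hxy
    · exact halt _
    · have hL : sing x x * bracket (sing x x) (sing y y) = 0 := by
        have h := hleibniz (sing x x) (sing x x) (sing y y)
        rw [e_mul_e_ne hxy, hzr, halt, zero_mul, zero_add] at h
        exact h.symm
      have hR : bracket (sing x x) (sing y y) * sing x x = 0 := by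
        have h := hleibniz (sing x x) (sing y y) (sing x x)
        rw [e_mul_e_ne (Ne.symm hxy), hzr, halt, mul_zero, add_zero] at h
        exact h.symm
      ext u v huv
      rw [IncidenceAlgebra.zero_apply]
      rcases eq_or_ne u x with hu | hu
      · rw [hu]
        have h1 := happ hL x v
        rwa [e_mul, IncidenceAlgebra.zero_apply] at h1
      · rcases eq_or_ne v x with hv | hv
        · rw [hv]
          have h1 := happ hR u x
          rwa [mul_e, IncidenceAlgebra.zero_apply] at h1
        · have h2 := hcross (sing y y) x u v hu hv
          have h3 := happ (hneg (sing y y) (sing x x)) u v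
          rwa [IncidenceAlgebra.neg_apply, h2, neg_zero] at h3
  -- support of bracket (e z) (sing x y)
  have hsupp : ∀ z x y u v : P, ¬(u = x ∧ v = y) →
      bracket (sing z z) (sing x y) u v = 0 := by
    intro z x y u v hne
    by_cases hxy : x ≤ y
    · have h1 := hleibniz (sing z z) (sing x x) (sing x y)
      rw [sing_mul_sing le_rfl hxy, hBee z x, zero_mul, zero_add] at h1
      have h2 := hleibniz (sing z z) (sing x y) (sing y y)
      rw [sing_mul_sing hxy le_rfl, hBee z y, mul_zero, add_zero] at h2
      by_cases hu : u = x
      · rw [hu]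
        have hv : v ≠ y := fun hv => hne ⟨hu, hv⟩
        have h2' := happ h2 x v
        rwa [mul_sing_ne hv] at h2'
      · have h1' := happ h1 u v
        rwa [sing_mul_ne hu] at h1'
    · rw [sing_eq_zero_of_not_le hxy, hzr, IncidenceAlgebra.zero_apply]
  -- the key value lemma: bracket (e y) (sing x y) x y = - sigma x y
  have hBysing : ∀ x y : P, x < y →
      bracket (sing y y) (sing x y) x y = - bracket (sing x x) (sing x y) x y := by
    intro x y hxy
    have h := hleibniz (sing x y) (sing x x) (sing y y)
    rw [e_mul_e_ne hxy.ne, hzr] at h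
    have h1 := happ h.symm x y
    rw [IncidenceAlgebra.add_apply, mul_e, e_mul, IncidenceAlgebra.zero_apply] at h1
    have e1 := happ (hneg (sing x x) (sing x y)) x y
    rw [IncidenceAlgebra.neg_apply] at e1
    have e2 := happ (hneg (sing y y) (sing x y)) x y
    rw [IncidenceAlgebra.neg_apply] at e2
    linear_combination - h1 + e1 + e2
  -- row values
  have hrow : ∀ (f : IncidenceAlgebra R P) (x z : P), x < z →
      bracket f (sing x x) x z = -(bracket (sing x x) (sing x z) x z * f x z) := by
    intro f x z hxz
    have h := L1 (sing x x) f x z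
    rw [sandwich x z f, hsmul_r, halt, hBee x z, zero_mul, mul_zero, mul_zero] at h
    rw [IncidenceAlgebra.zero_apply,
      IncidenceAlgebra.constSMul_apply, smul_eq_mul] at h
    have e1 := happ (hneg (sing x x) f) x z
    rw [IncidenceAlgebra.neg_apply] at e1
    linear_combination e1 - h
  -- column values
  have hcol : ∀ (f : IncidenceAlgebra R P) (z y : P), z < y →
      bracket f (sing y y) z y = bracket (sing z z) (sing z y) z y * f z y := by
    intro f z y hzy
    have h := L1 (sing y y) f z y
    rw [sandwich z y f, hsmul_r, hBee y z, zero_mul, halt, mul_zero, mul_zero] at h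
    rw [IncidenceAlgebra.zero_apply,
      IncidenceAlgebra.constSMul_apply, smul_eq_mul, hBysing z y hzy] at h
    have e1 := happ (hneg (sing y y) f) z y
    rw [IncidenceAlgebra.neg_apply] at e1
    linear_combination e1 - h
  -- sigma is constant on chains, part A : sigma a b = sigma a c for a < b < c
  have hcA : ∀ a b c : P, a < b → b < c →
      bracket (sing a a) (sing a b) a b = bracket (sing a a) (sing a c) a c := by
    intro a b c hab hbc
    have h := hleibniz (sing a a) (sing a b) (sing b c)
    rw [sing_mul_sing hab.le hbc.le] at h
    have h1 := happ h a c
    rw [IncidenceAlgebra.add_apply, mul_sing_eq hbc.le, sing_mul_eq hab.le] at h1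
    have h2 := hcross (sing b c) a b c hab.ne' (hab.trans hbc).ne'
    have e1 := happ (hneg (sing a a) (sing b c)) b c
    rw [IncidenceAlgebra.neg_apply, h2] at e1
    linear_combination - h1 - e1
  -- part B : sigma b c = sigma a c for a < b < c
  have hcB : ∀ a b c : P, a < b → b < c →
      bracket (sing b b) (sing b c) b c = bracket (sing a a) (sing a c) a c := by
    intro a b c hab hbc
    have h := hleibniz (sing c c) (sing a b) (sing b c)
    rw [sing_mul_sing hab.le hbc.le] at h
    have h1 := happ h a c
    rw [IncidenceAlgebra.add_apply, mul_sing_eq hbc.le, sing_mul_eq hab.le,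
      hBysing a c (hab.trans hbc), hBysing b c hbc] at h1
    have h2 := hcross (sing a b) c a b (hab.trans hbc).ne hbc.ne
    have e1 := happ (hneg (sing a b) (sing c c)) a b
    rw [IncidenceAlgebra.neg_apply, h2, neg_zero] at e1
    linear_combination h1 + e1
  -- key constancy
  have key : ∀ u x y v : P, u ≤ x → x < y → y ≤ v →
      bracket (sing x x) (sing x y) x y = bracket (sing u u) (sing u v) u v := by
    intro u x y v hux hxy hyv
    have h1 : bracket (sing x x) (sing x y) x y = bracket (sing u u) (sing u y) u y := by
      rcases hux.eq_or_lt with rfl | h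
      · rfl
      · exact hcB u x y h hxy
    have h2 : bracket (sing u u) (sing u y) u y = bracket (sing u u) (sing u v) u v := by
      rcases hyv.eq_or_lt with rfl | h
      · rfl
      · exact hcA u y v (lt_of_le_of_lt hux hxy) h
    exact h1.trans h2
  -- value of bracket f (sing x y) at (x,y)
  have hBfsing : ∀ (f : IncidenceAlgebra R P) (x y : P), x < y →
      bracket f (sing x y) x y
        = bracket (sing x x) (sing x y) x y * (f x x - f y y) := by
    intro f x y hxy
    have h := L1 (sing x y) f x y
    rw [sandwich x y f, hsmul_r, halt, smul_zero] at h
    rw [IncidenceAlgebra.zero_apply] at h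
    have t2 : (bracket (sing x y) (sing x x) * (f * sing y y) : IncidenceAlgebra R P) x y
        = -(bracket (sing x x) (sing x y) x y * f y y) := by
      rw [IncidenceAlgebra.mul_apply,
        Finset.sum_eq_single_of_mem y (mem_Icc.2 ⟨hxy.le, le_rfl⟩)]
      · rw [mul_e]
        have e1 := happ (hneg (sing x x) (sing x y)) x y
        rw [IncidenceAlgebra.neg_apply] at e1
        rw [e1]; ring
      · intro z hz hzy
        have e1 := happ (hneg (sing x x) (sing x y)) x z
        rw [IncidenceAlgebra.neg_apply, hsupp x x y x z (by tauto), neg_zero] at e1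
        rw [e1, zero_mul]
    have t3 : (sing x x * (f * bracket (sing x y) (sing y y)) : IncidenceAlgebra R P) x y
        = bracket (sing x x) (sing x y) x y * f x x := by
      rw [e_mul, IncidenceAlgebra.mul_apply,
        Finset.sum_eq_single_of_mem x (mem_Icc.2 ⟨le_rfl, hxy.le⟩)]
      · have e1 := happ (hneg (sing y y) (sing x y)) x y
        rw [IncidenceAlgebra.neg_apply, hBysing x y hxy, neg_neg] at e1
        rw [e1]; ring
      · intro z hz hzx
        have e1 := happ (hneg (sing y y) (sing x y)) z y
        rw [IncidenceAlgebra.neg_apply, hsupp y x y z y (by tauto), neg_zero] at e1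
        rw [e1, mul_zero]
    rw [t2, t3] at h
    have e1 := happ (hneg (sing x y) f) x y
    rw [IncidenceAlgebra.neg_apply] at e1
    linear_combination e1 - h
  -- the main off-diagonal formula
  have hoff : ∀ (f g : IncidenceAlgebra R P) (x y : P), x < y →
      bracket f g x y
        = bracket (sing x x) (sing x y) x y * ((f * g) x y - (g * f) x y) := by
    intro f g x y hxy
    have h := L1 f g x y
    rw [sandwich x y g, hsmul_r] at h
    rw [IncidenceAlgebra.constSMul_apply, smul_eq_mul, hBfsing f x y hxy] at h
    have t2 : (bracket f (sing x x) * (g * sing y y) : IncidenceAlgebra R P) x y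
        = bracket (sing x x) (sing x y) x y * (f x x * g x y)
          - bracket (sing x x) (sing x y) x y * (f * g) x y := by
      rw [IncidenceAlgebra.mul_apply]
      have hsum : ∀ z ∈ Icc x y,
          bracket f (sing x x) x z * (g * sing y y : IncidenceAlgebra R P) z y
          = (if z = x then bracket (sing x x) (sing x y) x y * (f x x * g x y) else 0)
            - bracket (sing x x) (sing x y) x y * (f x z * g z y) := by
        intro z hz
        rw [mul_e]
        rcases eq_or_ne z x with rfl | hzx
        · rw [if_pos rfl, hBediag f z]; ring
        · rw [if_neg hzx]
          have hxz : x < z := lt_of_le_of_ne (mem_Icc.1 hz).1 (Ne.symm hzx)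
          rw [hrow f x z hxz, key x x z y le_rfl hxz (mem_Icc.1 hz).2]
          ring
      rw [Finset.sum_congr rfl hsum, Finset.sum_sub_distrib,
        Finset.sum_ite_eq' (Icc x y) x, if_pos (mem_Icc.2 ⟨le_rfl, hxy.le⟩),
        ← Finset.mul_sum, ← IncidenceAlgebra.mul_apply]
    have t3 : (sing x x * (g * bracket f (sing y y)) : IncidenceAlgebra R P) x y
        = bracket (sing x x) (sing x y) x y * (g * f) x y
          - bracket (sing x x) (sing x y) x y * (g x y * f y y) := by
      rw [e_mul, IncidenceAlgebra.mul_apply]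
      have hsum : ∀ z ∈ Icc x y, g x z * bracket f (sing y y) z y
          = bracket (sing x x) (sing x y) x y * (g x z * f z y)
            - (if z = y then bracket (sing x x) (sing x y) x y * (g x y * f y y) else 0) := by
        intro z hz
        rcases eq_or_ne z y with rfl | hzy
        · rw [if_pos rfl, hBediag f z]; ring
        · rw [if_neg hzy]
          have hzy' : z < y := lt_of_le_of_ne (mem_Icc.1 hz).2 hzy
          rw [hcol f z y hzy', key x z y y (mem_Icc.1 hz).1 hzy' le_rfl]
          ring
      rw [Finset.sum_congr rfl hsum, Finset.sum_sub_distrib,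
        Finset.sum_ite_eq' (Icc x y) y, if_pos (mem_Icc.2 ⟨hxy.le, le_rfl⟩),
        ← Finset.mul_sum, ← IncidenceAlgebra.mul_apply]
    rw [t2, t3] at h
    linear_combination h
  -- the diagonal vanishes
  have hdiag : ∀ (f g : IncidenceAlgebra R P) (x : P), bracket f g x x = 0 := by
    intro f g x
    have h := L1 f g x x
    rw [sandwich x x g, hsmul_r] at h
    rw [IncidenceAlgebra.constSMul_apply, smul_eq_mul] at h
    rw [mul_apply_self, mul_apply_self, mul_apply_self, mul_apply_self] at h
    rw [hBediag f x] at h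
    linear_combination h
  -- put everything together
  refine ⟨fun p => bracket (sing p.1.1 p.1.1) (sing p.1.1 p.1.2) p.1.1 p.1.2, ⟨?_, ?_⟩, ?_⟩
  · rintro ⟨⟨x, y⟩, hxy⟩ ⟨⟨u, v⟩, huv⟩ hch
    show bracket (sing x x) (sing x y) x y = bracket (sing u u) (sing u v) u v
    have hxmem : x ∈ ({x, y, u, v} : Set P) := by simp
    have hymem : y ∈ ({x, y, u, v} : Set P) := by simp
    have humem : u ∈ ({x, y, u, v} : Set P) := by simp
    have hvmem : v ∈ ({x, y, u, v} : Set P) := by simp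
    have hch' : IsChain (· ≤ ·) ({x, y, u, v} : Set P) := hch
    have hcomp1 : u ≤ x ∨ x ≤ u := by
      rcases eq_or_ne u x with h | h
      · exact Or.inl h.le
      · exact hch' humem hxmem h
    have hcomp2 : y ≤ v ∨ v ≤ y := by
      rcases eq_or_ne y v with h | h
      · exact Or.inl h.le
      · exact hch' hymem hvmem h
    rcases hcomp1 with h1 | h1 <;> rcases hcomp2 with h2 | h2
    · exact key u x y v h1 hxy h2
    · exact (key u x y y h1 hxy le_rfl).trans (key u u v y le_rfl huv h2).symm
    · exact (key x x y v le_rfl hxy h2).trans (key x u v v h1 huv le_rfl).symm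
    · exact (key x u v y h1 huv h2).symm
  · intro f g
    refine ⟨hdiag f g, ?_⟩
    rintro ⟨⟨x, y⟩, hxy⟩
    show bracket f g x y
      = bracket (sing x x) (sing x y) x y * ((f * g - g * f) : IncidenceAlgebra R P) x y
    rw [IncidenceAlgebra.sub_apply]
    exact hoff f g x y hxy
  · rintro σ' ⟨hc', hv'⟩
    funext p
    obtain ⟨⟨x, y⟩, hxy⟩ := p
    have h := (hv' (sing x x) (sing x y)).2 ⟨(x, y), hxy⟩
    show σ' ⟨(x, y), hxy⟩ = bracket (sing x x) (sing x y) x y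
    rw [IncidenceAlgebra.sub_apply, sing_mul_sing le_rfl hxy.le] at h
    rw [sing_apply_self hxy.le, mul_sing_ne hxy.ne' (sing x y)] at h
    rw [h]; ring
end
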